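/- arXiv:2511.06539 — 11 statements merged into one kernel-verified Lean document; each statement's English description precedes it below -/
import Mathlib

section
/- For every n ≥ 5, the antiprism graph A_n is d-balanced, i.e., its balanced domination number equals 0. -/
open Finset

open scoped Classical in
noncomputable def closedSum {V : Type*} [Fintype V] (G : SimpleGraph V) (f : V → ℤ) (v : V) : ℤ :=
  f v + ∑ u ∈ Finset.univ.filter (fun u => G.Adj v u), f u

def IsBDF {V : Type*} [Fintype V] (G : SimpleGraph V) (f : V → ℤ) : Prop :=
  (∀ v, f v = -1 ∨ f v = 0 ∨ f v = 1) ∧ ∀ v, closedSum G f v = 0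


/-- The antiprism graph `A n`: three layers of `n` vertices, each layer a cycle,
with edges a_i b_i, b_i c_i, a_{i+1} b_i, b_{i+1} c_i (indices mod n). -/
def antiprism (n : ℕ) : SimpleGraph (Fin n × Fin 3) :=
  SimpleGraph.fromRel (fun p q =>
    (p.2 = q.2 ∧ (q.1 : ℕ) = ((p.1 : ℕ) + 1) % n) ∨
    ((p.1 = q.1) ∧ (p.2 : ℕ) + 1 = (q.2 : ℕ)) ∨
    ((p.1 : ℕ) = ((q.1 : ℕ) + 1) % n ∧ (p.2 : ℕ) + 1 = (q.2 : ℕ)))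

/-!
Summing the balance conditions `closedSum G f u = 0` against weights `w u` gives
`∑ v, f v * closedSum G w v = 0`, because the closed-neighbourhood relation is symmetric.
On the antiprism the weights `1, -1, 1` on the three layers have closed-neighbourhood sum `1` at
every vertex, so every balanced dominating function has total weight `0`.
-/

lemma sum_mul_closedSum_comm {V : Type*} [Fintype V] (G : SimpleGraph V) (f g : V → ℤ) :
    ∑ v, f v * closedSum G g v = ∑ v, g v * closedSum G f v := by
  classical
  simp only [closedSum, mul_add, sum_add_distrib, mul_sum, sum_filter, mul_ite, mul_zero]
  rw [sum_comm (f := fun v u => if G.Adj v u then f v * g u else 0)]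
  congr 1
  · exact sum_congr rfl fun v _ => mul_comm _ _
  · exact sum_congr rfl fun v _ => sum_congr rfl fun u _ => by rw [G.adj_comm, mul_comm]

lemma sum_eq_zero_of_closedSum_eq_zero {V : Type*} [Fintype V] {G : SimpleGraph V} {f w : V → ℤ}
    (hw : ∀ v, closedSum G w v = 1) (hf : ∀ v, closedSum G f v = 0) : ∑ v, f v = 0 :=
  calc ∑ v, f v = ∑ v, f v * closedSum G w v := by simp [hw]
    _ = ∑ v, w v * closedSum G f v := sum_mul_closedSum_comm G f w
    _ = 0 := by simp [hf]

namespace Fin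

variable {n : ℕ} [NeZero n]

lemma val_eq_val_add_one_mod_iff {a b : Fin n} : (b : ℕ) = ((a : ℕ) + 1) % n ↔ b = a + 1 := by
  rw [Fin.ext_iff, Fin.val_add, Fin.val_one', Nat.add_mod_mod]

lemma add_one_ne_self (hn : 2 ≤ n) (i : Fin n) : i + 1 ≠ i := by
  rw [Ne, add_eq_left, Fin.ext_iff, Fin.val_one', Fin.val_zero, Nat.mod_eq_of_lt hn]
  omega

lemma sub_one_ne_self (hn : 2 ≤ n) (i : Fin n) : i - 1 ≠ i := by
  simpa using (add_one_ne_self hn (i - 1)).symm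

lemma add_one_ne_sub_one (hn : 3 ≤ n) (i : Fin n) : i + 1 ≠ i - 1 := by
  rw [Ne, sub_eq_add_neg, add_right_inj, eq_neg_iff_add_eq_zero, Fin.ext_iff, Fin.val_add,
    Fin.val_one', Nat.mod_eq_of_lt (by omega : 1 < n), Fin.val_zero, Nat.mod_eq_of_lt hn]
  omega

end Fin

section Antiprism

variable {n : ℕ} [NeZero n]

open scoped Classical in
lemma antiprism_neighbors_zero (hn : 2 ≤ n) (i : Fin n) :
    univ.filter (fun u => (antiprism n).Adj (i, 0) u) =
      {(i + 1, 0), (i - 1, 0), (i, 1), (i - 1, 1)} := by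
  ext ⟨j, t⟩
  have := Fin.add_one_ne_self hn
  fin_cases t <;> simp [antiprism, Fin.val_eq_val_add_one_mod_iff, eq_sub_iff_add_eq] <;> grind

open scoped Classical in
lemma antiprism_neighbors_one (hn : 2 ≤ n) (i : Fin n) :
    univ.filter (fun u => (antiprism n).Adj (i, 1) u) =
      {(i + 1, 1), (i - 1, 1), (i, 0), (i + 1, 0), (i, 2), (i - 1, 2)} := by
  ext ⟨j, t⟩
  have := Fin.add_one_ne_self hn
  fin_cases t <;> simp [antiprism, Fin.val_eq_val_add_one_mod_iff, eq_sub_iff_add_eq] <;> grind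

open scoped Classical in
lemma antiprism_neighbors_two (hn : 2 ≤ n) (i : Fin n) :
    univ.filter (fun u => (antiprism n).Adj (i, 2) u) =
      {(i + 1, 2), (i - 1, 2), (i, 1), (i + 1, 1)} := by
  ext ⟨j, t⟩
  have := Fin.add_one_ne_self hn
  fin_cases t <;> simp [antiprism, Fin.val_eq_val_add_one_mod_iff, eq_sub_iff_add_eq]
  grind

end Antiprism

def antiprismLayerSign (n : ℕ) (v : Fin n × Fin 3) : ℤ := if v.2 = 1 then -1 else 1

lemma closedSum_antiprismLayerSign {n : ℕ} (hn : 3 ≤ n) (v : Fin n × Fin 3) :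
    closedSum (antiprism n) (antiprismLayerSign n) v = 1 := by
  have : NeZero n := ⟨by omega⟩
  have hn₂ : 2 ≤ n := by omega
  obtain ⟨i, s⟩ := v
  have h₁ := Fin.add_one_ne_sub_one hn i
  have h₂ := Fin.sub_one_ne_self hn₂ i
  have h₃ := Fin.add_one_ne_self hn₂ i
  fin_cases s <;>
    simp [closedSum, antiprism_neighbors_zero hn₂, antiprism_neighbors_one hn₂,
      antiprism_neighbors_two hn₂, antiprismLayerSign, h₁, h₂, h₃, h₁.symm, h₂.symm,
      h₃.symm]

/-- For every n ≥ 5 the antiprism A_n is d-balanced: the maximum weight of a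
balanced dominating function equals 0. -/
theorem antiprism_d_balanced (n : ℕ) (hn : 5 ≤ n) :
    IsGreatest {w : ℤ | ∃ f : Fin n × Fin 3 → ℤ, IsBDF (antiprism n) f ∧ w = ∑ v, f v} 0 := by
  refine ⟨⟨0, ⟨fun _ => by simp, fun _ => by simp [closedSum]⟩, by simp⟩, ?_⟩
  rintro w ⟨f, ⟨-, hf⟩, rfl⟩
  exact (sum_eq_zero_of_closedSum_eq_zero (closedSum_antiprismLayerSign (by omega)) hf).le
end

section
/- For every n ≥ 5, the convex polytope graph D_n is d-balanced, i.e., its balanced domination number equals 0. -/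
open Finset

/-- The convex polytope graph `D n`: four layers a,b,c,d of `n` vertices with edges
a_i a_{i+1}, d_i d_{i+1}, a_i b_i, b_i c_i, b_{i+1} c_i, c_i d_i (indices mod n). -/
def polytopeD (n : ℕ) : SimpleGraph (Fin n × Fin 4) :=
  SimpleGraph.fromRel (fun p q =>
    (p.2 = q.2 ∧ ((p.2 : ℕ) = 0 ∨ (p.2 : ℕ) = 3) ∧ (q.1 : ℕ) = ((p.1 : ℕ) + 1) % n) ∨
    ((p.1 = q.1) ∧ (p.2 : ℕ) + 1 = (q.2 : ℕ)) ∨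
    ((p.2 : ℕ) = 2 ∧ (q.2 : ℕ) = 1 ∧ (q.1 : ℕ) = ((p.1 : ℕ) + 1) % n))

/-!
Every vertex of `D n` has degree 3. Summing the balance conditions `f[N[v]] = 0` over all
vertices counts each label `1 + 3 = 4` times, so every balanced dominating function has total
weight 0, and the zero function is one of them.
-/

theorem IsBDF.zero {V : Type*} [Fintype V] (G : SimpleGraph V) : IsBDF G 0 :=
  ⟨fun _ => Or.inr (Or.inl rfl), fun _ => by simp [closedSum]⟩

namespace SimpleGraph

variable {V : Type*} [Fintype V] {G : SimpleGraph V} [G.LocallyFinite]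

theorem closedSum_eq (f : V → ℤ) (v : V) :
    closedSum G f v = f v + ∑ u ∈ G.neighborFinset v, f u := by
  classical
  rw [closedSum]
  congr 2
  ext
  simp

theorem sum_sum_neighborFinset_of_isRegularOfDegree {M : Type*} [AddCommMonoid M] {d : ℕ}
    (hG : G.IsRegularOfDegree d) (f : V → M) :
    ∑ v, ∑ u ∈ G.neighborFinset v, f u = d • ∑ v, f v :=
  calc ∑ v, ∑ u ∈ G.neighborFinset v, f u = ∑ u, ∑ _v ∈ G.neighborFinset u, f u :=
        Finset.sum_comm' fun v u => by simp [adj_comm]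
    _ = d • ∑ v, f v := by simp [Finset.smul_sum, hG.degree_eq]

theorem sum_closedSum_of_isRegularOfDegree {d : ℕ} (hG : G.IsRegularOfDegree d)
    (f : V → ℤ) : ∑ v, closedSum G f v = (d + 1) * ∑ v, f v := by
  simp only [closedSum_eq, sum_add_distrib, sum_sum_neighborFinset_of_isRegularOfDegree hG,
    nsmul_eq_mul]
  ring

end SimpleGraph

section Regular

variable {V : Type*} [Fintype V] {G : SimpleGraph V} [G.LocallyFinite] {d : ℕ}

theorem IsBDF.sum_eq_zero_of_isRegularOfDegree (hG : G.IsRegularOfDegree d) {f : V → ℤ}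
    (hf : IsBDF G f) : ∑ v, f v = 0 := by
  have h := G.sum_closedSum_of_isRegularOfDegree hG f
  simp only [hf.2, sum_const_zero] at h
  exact (mul_eq_zero.mp h.symm).resolve_left (by positivity)

theorem isGreatest_bdfWeights_zero_of_isRegularOfDegree (hG : G.IsRegularOfDegree d) :
    IsGreatest {w : ℤ | ∃ f : V → ℤ, IsBDF G f ∧ w = ∑ v, f v} 0 :=
  ⟨⟨0, IsBDF.zero G, by simp⟩, by
    rintro w ⟨f, hf, rfl⟩
    exact (hf.sum_eq_zero_of_isRegularOfDegree hG).le⟩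

end Regular

section PolytopeD

variable {n : ℕ} [NeZero n]

theorem Fin.val_eq_val_add_one_mod_iff_s7 {i j : Fin n} : (j : ℕ) = (i + 1) % n ↔ j = i + 1 := by
  rw [Fin.ext_iff, Fin.val_add, Fin.val_one', Nat.add_mod_mod]

theorem Fin.add_one_ne_self_s7 (hn : 1 < n) (i : Fin n) : i + 1 ≠ i := by
  simp [Fin.ext_iff, Nat.mod_eq_of_lt hn]

theorem Fin.add_one_ne_sub_one_s7 (hn : 2 < n) (i : Fin n) : i + 1 ≠ i - 1 := by
  rw [Ne, eq_sub_iff_add_eq, add_assoc, add_eq_left, Fin.ext_iff, Fin.val_add, Fin.val_one',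
    Nat.mod_eq_of_lt (by omega : 1 < n), Nat.mod_eq_of_lt hn]
  simp

def polytopeDNeighbors : Fin n × Fin 4 → Finset (Fin n × Fin 4)
  | (i, 0) => {(i + 1, 0), (i - 1, 0), (i, 1)}
  | (i, 1) => {(i, 0), (i, 2), (i - 1, 2)}
  | (i, 2) => {(i, 1), (i + 1, 1), (i, 3)}
  | (i, 3) => {(i + 1, 3), (i - 1, 3), (i, 2)}

theorem polytopeD_neighborSet (hn : 1 < n) (v : Fin n × Fin 4) :
    (polytopeD n).neighborSet v = polytopeDNeighbors v := by
  have := Fin.add_one_ne_self_s7 hn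
  obtain ⟨i, t⟩ := v
  ext ⟨j, s⟩
  fin_cases t <;> fin_cases s <;>
    simp [polytopeD, polytopeDNeighbors, Fin.val_eq_val_add_one_mod_iff_s7, eq_sub_iff_add_eq,
      Prod.ext_iff] <;> grind

theorem card_polytopeDNeighbors (hn : 2 < n) (v : Fin n × Fin 4) :
    #(polytopeDNeighbors v) = 3 := by
  have := Fin.add_one_ne_self_s7 (by omega) v.1
  have := Fin.add_one_ne_sub_one_s7 hn v.1
  obtain ⟨i, t⟩ := v
  fin_cases t <;>
    simp_all [polytopeDNeighbors, Finset.card_insert_of_notMem, eq_sub_iff_add_eq]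

end PolytopeD

open scoped Classical in
theorem polytopeD_isRegularOfDegree {n : ℕ} (hn : 2 < n) :
    (polytopeD n).IsRegularOfDegree 3 := by
  have : NeZero n := ⟨by omega⟩
  intro v
  rw [← SimpleGraph.card_neighborFinset_eq_degree, ← card_polytopeDNeighbors hn v]
  congr 1
  ext w
  rw [SimpleGraph.mem_neighborFinset, ← SimpleGraph.mem_neighborSet,
    polytopeD_neighborSet (by omega), mem_coe]

/-- For every n ≥ 5 the convex polytope graph D_n is d-balanced. -/
theorem polytopeD_d_balanced (n : ℕ) (hn : 5 ≤ n) :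
    IsGreatest {w : ℤ | ∃ f : Fin n × Fin 4 → ℤ, IsBDF (polytopeD n) f ∧ w = ∑ v, f v} 0 := by
  classical
  exact isGreatest_bdfWeights_zero_of_isRegularOfDegree (polytopeD_isRegularOfDegree (by omega))
end

section
/- Let T be a rooted tree with root a_0 having children a_1,...,a_n (n ≥ 2), where a_i has l_i leaf children and no deeper descendants. If f is a balanced dominating function on T with x_0 = f(a_0) and x_i = f(a_i), then x_0 = (l_i − 1)·x_i for every i ∈ {1,...,n}, and the weight of f equals (1 − n)·x_0. -/
open Finset

/-- Vertices of the depth-two rooted tree: the root, the `n` children of the root,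
and for each child `i` its `l i` leaf children. -/
abbrev TwoLevelVtx (n : ℕ) (l : Fin n → ℕ) : Type :=
  Unit ⊕ Fin n ⊕ (Σ i : Fin n, Fin (l i))

/-- The depth-two rooted tree: root adjacent to each child a_i, and each child a_i
adjacent to its l_i leaves. -/
def twoLevelTree (n : ℕ) (l : Fin n → ℕ) : SimpleGraph (TwoLevelVtx n l) :=
  SimpleGraph.fromRel (fun p q =>
    (p = Sum.inl () ∧ ∃ i : Fin n, q = Sum.inr (Sum.inl i)) ∨
    (∃ (i : Fin n) (j : Fin (l i)), p = Sum.inr (Sum.inl i) ∧ q = Sum.inr (Sum.inr ⟨i, j⟩)))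

/-! The closed neighbourhood of a leaf below `a_i` is the leaf and `a_i`, so every such leaf
carries `-x_i`. The closed neighbourhood of `a_i` is the root, `a_i` and its leaves, so the branch
`a_i` plus its leaves sums to `-x_0`; with the leaf values this reads `x_i + x_0 - l_i x_i = 0`.
The weight is `x_0` plus the `n` branch sums, i.e. `x_0 - n x_0`. -/

open scoped Classical in
theorem closedSum_eq_add_sum_ite {V : Type*} [Fintype V] (G : SimpleGraph V) (f : V → ℤ) (v : V) :
    closedSum G f v = f v + ∑ u, if G.Adj v u then f u else 0 := by
  rw [closedSum, Finset.sum_filter]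

theorem TwoLevelVtx.sum_eq_root_add_sum_branch {n : ℕ} {l : Fin n → ℕ} {M : Type*}
    [AddCommMonoid M] (g : TwoLevelVtx n l → M) :
    ∑ v, g v = g (Sum.inl ()) +
      ∑ i, (g (Sum.inr (Sum.inl i)) + ∑ j : Fin (l i), g (Sum.inr (Sum.inr ⟨i, j⟩))) := by
  simp only [Fintype.sum_sum_type, Fintype.sum_sigma, Finset.sum_add_distrib, Finset.univ_unique,
    Finset.sum_singleton, PUnit.default_eq_unit]

namespace twoLevelTree

variable {n : ℕ} {l : Fin n → ℕ}

@[simp] theorem adj_child_root (i : Fin n) :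
    (twoLevelTree n l).Adj (Sum.inr (Sum.inl i)) (Sum.inl ()) := by
  simp [twoLevelTree]

@[simp] theorem not_adj_child_child (i k : Fin n) :
    ¬ (twoLevelTree n l).Adj (Sum.inr (Sum.inl i)) (Sum.inr (Sum.inl k)) := by
  simp [twoLevelTree]

@[simp] theorem adj_child_leaf {i k : Fin n} {j : Fin (l k)} :
    (twoLevelTree n l).Adj (Sum.inr (Sum.inl i)) (Sum.inr (Sum.inr ⟨k, j⟩)) ↔ k = i := by
  simp only [twoLevelTree, SimpleGraph.fromRel_adj]
  aesop

@[simp] theorem adj_leaf_iff {i : Fin n} {j : Fin (l i)} {u : TwoLevelVtx n l} :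
    (twoLevelTree n l).Adj (Sum.inr (Sum.inr ⟨i, j⟩)) u ↔ u = Sum.inr (Sum.inl i) := by
  simp only [twoLevelTree, SimpleGraph.fromRel_adj]
  aesop

theorem closedSum_child (f : TwoLevelVtx n l → ℤ) (i : Fin n) :
    closedSum (twoLevelTree n l) f (Sum.inr (Sum.inl i)) =
      f (Sum.inr (Sum.inl i)) + f (Sum.inl ()) + ∑ j : Fin (l i), f (Sum.inr (Sum.inr ⟨i, j⟩)) := by
  rw [closedSum_eq_add_sum_ite, TwoLevelVtx.sum_eq_root_add_sum_branch]
  simp [add_assoc]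

theorem closedSum_leaf (f : TwoLevelVtx n l → ℤ) (i : Fin n) (j : Fin (l i)) :
    closedSum (twoLevelTree n l) f (Sum.inr (Sum.inr ⟨i, j⟩)) =
      f (Sum.inr (Sum.inr ⟨i, j⟩)) + f (Sum.inr (Sum.inl i)) := by
  simp [closedSum_eq_add_sum_ite]

variable {f : TwoLevelVtx n l → ℤ}

theorem leaf_eq_neg_child (hf : ∀ v, closedSum (twoLevelTree n l) f v = 0)
    (i : Fin n) (j : Fin (l i)) :
    f (Sum.inr (Sum.inr ⟨i, j⟩)) = -f (Sum.inr (Sum.inl i)) := by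
  linarith [closedSum_leaf f i j ▸ hf (Sum.inr (Sum.inr ⟨i, j⟩))]

theorem branch_sum_eq_neg_root (hf : ∀ v, closedSum (twoLevelTree n l) f v = 0) (i : Fin n) :
    f (Sum.inr (Sum.inl i)) + ∑ j : Fin (l i), f (Sum.inr (Sum.inr ⟨i, j⟩)) = -f (Sum.inl ()) := by
  linarith [closedSum_child f i ▸ hf (Sum.inr (Sum.inl i))]

theorem root_eq_mul_child (hf : ∀ v, closedSum (twoLevelTree n l) f v = 0) (i : Fin n) :
    f (Sum.inl ()) = ((l i : ℤ) - 1) * f (Sum.inr (Sum.inl i)) := by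
  have branch := branch_sum_eq_neg_root hf i
  simp only [leaf_eq_neg_child hf i, Finset.sum_const, Finset.card_univ, Fintype.card_fin,
    nsmul_eq_mul] at branch
  linarith

end twoLevelTree

theorem twoLevelTree_bdf_weight_general (n : ℕ) (l : Fin n → ℕ)
    (f : TwoLevelVtx n l → ℤ) (hf : IsBDF (twoLevelTree n l) f) :
    (∀ i : Fin n, f (Sum.inl ()) = ((l i : ℤ) - 1) * f (Sum.inr (Sum.inl i))) ∧
      ∑ v, f v = (1 - (n : ℤ)) * f (Sum.inl ()) := by
  refine ⟨twoLevelTree.root_eq_mul_child hf.2, ?_⟩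
  simp only [TwoLevelVtx.sum_eq_root_add_sum_branch, twoLevelTree.branch_sum_eq_neg_root hf.2,
    Finset.sum_neg_distrib, Finset.sum_const, Finset.card_univ, Fintype.card_fin, nsmul_eq_mul]
  ring

/-- For a BDF `f` on a depth-two rooted tree with `n ≥ 2` children of the root,
`f(root) = (l_i - 1)·f(a_i)` for each child `a_i`, and the weight equals `(1-n)·f(root)`. -/
theorem twoLevelTree_bdf_weight (n : ℕ) (hn : 2 ≤ n) (l : Fin n → ℕ)
    (f : TwoLevelVtx n l → ℤ) (hf : IsBDF (twoLevelTree n l) f) :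
    (∀ i : Fin n, f (Sum.inl ()) = ((l i : ℤ) - 1) * f (Sum.inr (Sum.inl i))) ∧
      ∑ v, f v = (1 - (n : ℤ)) * f (Sum.inl ()) :=
  twoLevelTree_bdf_weight_general n l f hf
end

section
/- If f is a balanced dominating function on a full binary tree T with root r, then f(r) = 0. -/
/-- Full binary trees: every vertex has exactly 0 or 2 children. -/
inductive FBT where
  | leaf : FBT
  | node : FBT → FBT → FBT

/-- Vertices (positions) of a full binary tree. -/
inductive FBT.Pos : FBT → Type where
  | here : ∀ t, FBT.Pos t
  | left : ∀ {s t : FBT}, FBT.Pos s → FBT.Pos (FBT.node s t)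
  | right : ∀ {s t : FBT}, FBT.Pos t → FBT.Pos (FBT.node s t)

/-- `BalancedFrom t f par` says: every vertex of `t` has zero closed-neighborhood sum
for the labeling `f`, where `par` is the label of the parent of the root of `t`
(take `par = 0` for the whole tree). -/
def FBT.BalancedFrom : (t : FBT) → (FBT.Pos t → ℤ) → ℤ → Prop
  | .leaf, f, par => par + f (.here _) = 0
  | .node s u, f, par =>
      (par + f (.here _) + f (.left (.here s)) + f (.right (.here u)) = 0) ∧
      FBT.BalancedFrom s (fun p => f (.left p)) (f (.here _)) ∧
      FBT.BalancedFrom u (fun p => f (.right p)) (f (.here _))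

/-- A balanced dominating function on a full binary tree: labels in {-1,0,1} with
zero closed-neighborhood sum at every vertex. -/
def FBT.IsBDF (t : FBT) (f : FBT.Pos t → ℤ) : Prop :=
  (∀ p, f p = -1 ∨ f p = 0 ∨ f p = 1) ∧ FBT.BalancedFrom t f 0

/-! The balance equations force every vertex to have the same parity as its parent: at a leaf `v`
the equation reads `f(parent) + f(v) = 0`, and at an internal vertex whose children already agree
with it mod 2, the equation `f(parent) + f(v) + f(left) + f(right) = 0` reduces mod 2 to the same
statement. The root's "parent label" is `0`, so `f(r)` is even, and `f(r) ∈ {-1, 0, 1}` leaves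
only `f(r) = 0`. -/

theorem FBT.BalancedFrom.even_root_add {t : FBT} {f : FBT.Pos t → ℤ} {par : ℤ}
    (h : FBT.BalancedFrom t f par) : Even (f (.here t) + par) := by
  induction t generalizing par with
  | leaf =>
    exact ⟨0, by simp only [FBT.BalancedFrom] at h; omega⟩
  | node s u ihs ihu =>
    obtain ⟨hroot, hs, hu⟩ := h
    obtain ⟨a, ha⟩ := ihs hs
    obtain ⟨b, hb⟩ := ihu hu
    exact ⟨f (.here _) - a - b, by omega⟩

/-- If f is a balanced dominating function on a full binary tree with root r,
then f(r) = 0. -/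
theorem FBT.bdf_root_eq_zero (t : FBT) (f : FBT.Pos t → ℤ) (hf : FBT.IsBDF t f) :
    f (.here t) = 0 := by
  obtain ⟨k, hk⟩ := hf.2.even_root_add
  rcases hf.1 (.here t) with h | h | h <;> omega
end

section
/- Every full binary tree is d-balanced; moreover, the only balanced dominating function on a full binary tree is the identically zero function. -/
/-- The total weight of a labeling of a full binary tree. -/
def FBT.weight : (t : FBT) → (FBT.Pos t → ℤ) → ℤ
  | .leaf, f => f (.here _)
  | .node s u, f =>
      f (.here _) + FBT.weight s (fun p => f (.left p)) + FBT.weight u (fun p => f (.right p))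

/-!
Label the root of `t` by `a` and its parent by `par`. By induction the root label is forced:
`a = t.rootSign * par` with `t.rootSign = ±1`. At a node whose children have signs `σ, τ`
the balance condition reads `par + (1 + σ + τ) a = 0`; the coefficient is `-1`, `1` or `3`,
and in the last case `|par| ≤ 1` forces `par = a = 0`. Hence a zero label on the parent
propagates down the whole tree, and the only balanced dominating function is `0`.
-/

namespace FBT

def rootSign : FBT → ℤ
  | leaf => -1
  | node s u => if s.rootSign = -1 ∧ u.rootSign = -1 then 1 else -1

lemma rootSign_eq_one_or_neg_one (t : FBT) : t.rootSign = 1 ∨ t.rootSign = -1 := by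
  cases t with
  | leaf => exact Or.inr rfl
  | node s u => unfold rootSign; split_ifs <;> simp

lemma root_eq_rootSign_mul (t : FBT) {f : Pos t → ℤ} {par : ℤ} (hf : ∀ p, |f p| ≤ 1)
    (hpar : |par| ≤ 1) (hb : BalancedFrom t f par) : f (.here t) = t.rootSign * par := by
  induction t generalizing par with
  | leaf =>
    simp only [BalancedFrom, rootSign] at hb ⊢
    omega
  | node s u ihs ihu =>
    obtain ⟨hroot, hs, hu⟩ := hb
    have hleft := ihs (fun p => hf (.left p)) (hf (.here _)) hs
    have hright := ihu (fun p => hf (.right p)) (hf (.here _)) hu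
    rw [hleft, hright] at hroot
    rw [abs_le] at hpar
    unfold rootSign
    rcases s.rootSign_eq_one_or_neg_one with hσ | hσ <;>
      rcases u.rootSign_eq_one_or_neg_one with hτ | hτ <;>
      simp [hσ, hτ] at hroot ⊢ <;> omega

lemma root_eq_zero_of_balancedFrom_zero (t : FBT) {f : Pos t → ℤ} (hf : ∀ p, |f p| ≤ 1)
    (hb : BalancedFrom t f 0) : f (.here t) = 0 := by
  simpa using root_eq_rootSign_mul t hf (by simp) hb

lemma eq_zero_of_balancedFrom_zero (t : FBT) {f : Pos t → ℤ} (hf : ∀ p, |f p| ≤ 1)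
    (hb : BalancedFrom t f 0) (p : Pos t) : f p = 0 := by
  induction t with
  | leaf => cases p; exact root_eq_zero_of_balancedFrom_zero _ hf hb
  | node s u ihs ihu =>
    have hroot := root_eq_zero_of_balancedFrom_zero _ hf hb
    obtain ⟨-, hs, hu⟩ := hb
    rw [hroot] at hs hu
    cases p with
    | here => exact hroot
    | left q => exact ihs (fun _ => hf _) hs q
    | right q => exact ihu (fun _ => hf _) hu q

lemma balancedFrom_zero (t : FBT) : BalancedFrom t (fun _ => 0) 0 := by
  induction t with
  | leaf => simp [BalancedFrom]
  | node s u ihs ihu => exact ⟨by simp, ihs, ihu⟩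

lemma weight_zero (t : FBT) : weight t (fun _ => 0) = 0 := by
  induction t with
  | leaf => rfl
  | node s u ihs ihu => simp [weight, ihs, ihu]

end FBT

/-- Every full binary tree is d-balanced; moreover the only balanced dominating
function on a full binary tree is the identically zero function. -/
theorem FBT.d_balanced (t : FBT) :
    (∀ f : FBT.Pos t → ℤ, FBT.IsBDF t f → ∀ p, f p = 0) ∧
      IsGreatest {w : ℤ | ∃ f : FBT.Pos t → ℤ, FBT.IsBDF t f ∧ w = FBT.weight t f} 0 := by
  have hzero : ∀ f : FBT.Pos t → ℤ, FBT.IsBDF t f → ∀ p, f p = 0 := fun f hf =>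
    FBT.eq_zero_of_balancedFrom_zero t (fun p => by rcases hf.1 p with h | h | h <;> simp [h]) hf.2
  refine ⟨hzero, ⟨fun _ => 0, ⟨fun _ => by simp, FBT.balancedFrom_zero t⟩, (FBT.weight_zero t).symm⟩, ?_⟩
  rintro w ⟨f, hf, rfl⟩
  obtain rfl : f = fun _ => 0 := funext (hzero f hf)
  exact (FBT.weight_zero t).le
end

section
/- Let f be a modified balanced dominating function on the caterpillar graph C_n (n ≥ 2) with spine labels x_1,...,x_n, where x_i ∈ {-1,1} whenever l_i ≠ 1. Then l_1 = 1 + x_1 x_2, l_n = 1 + x_{n−1} x_n, and l_i = 1 + x_{i−1} x_i + x_i x_{i+1} for all 2 ≤ i ≤ n−1. -/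
open Finset

/-- Vertices of the caterpillar: `n` spine vertices plus `l i` leaves attached to spine vertex `i`. -/
abbrev CatVtx (n : ℕ) (l : Fin n → ℕ) : Type :=
  Fin n ⊕ (Σ i : Fin n, Fin (l i))

/-- The caterpillar graph: a spine path a_1,...,a_n with `l i` leaves attached to `a_i`. -/
def caterpillar (n : ℕ) (l : Fin n → ℕ) : SimpleGraph (CatVtx n l) :=
  SimpleGraph.fromRel (fun p q =>
    (∃ i i' : Fin n, p = Sum.inl i ∧ q = Sum.inl i' ∧ (i' : ℕ) = (i : ℕ) + 1) ∨
    (∃ (i : Fin n) (j : Fin (l i)), p = Sum.inl i ∧ q = Sum.inr ⟨i, j⟩))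

/-- A modified balanced dominating function on the caterpillar: a BDF whose spine
labels are in {-1,1} at every spine vertex with `l i ≠ 1`. -/
def IsMBDF (n : ℕ) (l : Fin n → ℕ) (f : CatVtx n l → ℤ) : Prop :=
  IsBDF (caterpillar n l) f ∧
    ∀ i : Fin n, l i ≠ 1 → (f (Sum.inl i) = -1 ∨ f (Sum.inl i) = 1)

/-!
Every leaf of `a_i` is adjacent only to `a_i`, so its closed sum forces it to carry `-x_i`.
The closed sum at `a_i` then reads `(l_i - 1) x_i = s_i`, where `s_i` is the sum of the labels
of the spine neighbours of `a_i`. If `l_i = 1` this gives `s_i = 0`; otherwise `x_i² = 1`, and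
multiplying by `x_i` gives `l_i - 1 = x_i s_i`.
-/

section Caterpillar

open SimpleGraph

variable {n : ℕ} {l : Fin n → ℕ}

theorem caterpillar_adj_inr_iff (i : Fin n) (j : Fin (l i)) (u : CatVtx n l) :
    (caterpillar n l).Adj (Sum.inr ⟨i, j⟩) u ↔ u = Sum.inl i := by
  simp only [caterpillar, fromRel_adj]
  constructor
  · rintro ⟨-, (⟨_, _, h, -⟩ | ⟨_, _, h, -⟩) | (⟨_, _, -, h, -⟩ | ⟨_, _, rfl, h⟩)⟩ <;>
      simp_all
  · rintro rfl
    exact ⟨by simp, .inr (.inr ⟨i, j, rfl, rfl⟩)⟩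

theorem caterpillar_adj_inl_inl_iff (i k : Fin n) :
    (caterpillar n l).Adj (Sum.inl i) (Sum.inl k) ↔ (pathGraph n).Adj i k := by
  simp only [caterpillar, fromRel_adj, pathGraph_adj]
  constructor
  · rintro ⟨-, (⟨_, _, h₁, h₂, h⟩ | ⟨_, _, -, h⟩) | (⟨_, _, h₁, h₂, h⟩ | ⟨_, _, -, h⟩)⟩ <;>
      simp_all
  · rintro (h | h)
    · exact ⟨Sum.inl_injective.ne (Fin.ne_of_val_ne (by omega)),
        .inl (.inl ⟨i, k, rfl, rfl, h.symm⟩)⟩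
    · exact ⟨Sum.inl_injective.ne (Fin.ne_of_val_ne (by omega)),
        .inr (.inl ⟨k, i, rfl, rfl, h.symm⟩)⟩

theorem caterpillar_adj_inl_inr_iff (i k : Fin n) (j : Fin (l k)) :
    (caterpillar n l).Adj (Sum.inl i) (Sum.inr ⟨k, j⟩) ↔ k = i := by
  simp only [caterpillar, fromRel_adj]
  constructor
  · rintro ⟨-, (⟨_, _, -, h, -⟩ | ⟨_, _, h₁, h₂⟩) | (⟨_, _, h, -⟩ | ⟨_, _, h, -⟩)⟩ <;>
      simp_all
  · rintro rfl
    exact ⟨by simp, .inl (.inr ⟨k, j, rfl, rfl⟩)⟩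

theorem closedSum_caterpillar_inr (f : CatVtx n l → ℤ) (i : Fin n) (j : Fin (l i)) :
    closedSum (caterpillar n l) f (Sum.inr ⟨i, j⟩) = f (Sum.inr ⟨i, j⟩) + f (Sum.inl i) := by
  classical
  have hnbrs : univ.filter ((caterpillar n l).Adj (Sum.inr ⟨i, j⟩)) = {Sum.inl i} := by
    ext u
    simp [caterpillar_adj_inr_iff]
  rw [closedSum, hnbrs, sum_singleton]

open scoped Classical in
theorem closedSum_caterpillar_inl (f : CatVtx n l → ℤ) (i : Fin n) :
    closedSum (caterpillar n l) f (Sum.inl i) =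
      f (Sum.inl i) + ∑ k ∈ univ.filter ((pathGraph n).Adj i), f (Sum.inl k) +
        ∑ j : Fin (l i), f (Sum.inr ⟨i, j⟩) := by
  rw [closedSum, sum_filter, Fintype.sum_sum_type, ← univ_sigma_univ, sum_sigma, add_assoc,
    sum_filter]
  simp only [caterpillar_adj_inl_inl_iff, caterpillar_adj_inl_inr_iff, sum_ite_irrel,
    sum_const_zero, sum_ite_eq', mem_univ, if_true]

theorem IsBDF.caterpillar_leaf_eq_neg {f : CatVtx n l → ℤ} (hf : IsBDF (caterpillar n l) f)
    (i : Fin n) (j : Fin (l i)) : f (Sum.inr ⟨i, j⟩) = -f (Sum.inl i) := by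
  have h := hf.2 (Sum.inr ⟨i, j⟩)
  rw [closedSum_caterpillar_inr] at h
  linarith

open scoped Classical in
theorem IsBDF.caterpillar_spine_balance {f : CatVtx n l → ℤ} (hf : IsBDF (caterpillar n l) f)
    (i : Fin n) :
    f (Sum.inl i) + ∑ k ∈ univ.filter ((pathGraph n).Adj i), f (Sum.inl k) =
      l i * f (Sum.inl i) := by
  have h := hf.2 (Sum.inl i)
  simp only [closedSum_caterpillar_inl, hf.caterpillar_leaf_eq_neg, sum_neg_distrib, sum_const,
    card_univ, Fintype.card_fin, nsmul_eq_mul] at h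
  linarith

theorem eq_one_add_mul_of_add_eq_mul {R : Type*} [CommRing R] {L x s : R} (h : x + s = L * x)
    (hx : L ≠ 1 → x * x = 1) : L = 1 + x * s := by
  by_cases hL : L = 1
  · subst hL
    linear_combination (-x) * h
  · linear_combination (-x) * h - (L - 1) * hx hL

open scoped Classical in
theorem IsMBDF.leafCount_eq {f : CatVtx n l → ℤ} (hf : IsMBDF n l f) (i : Fin n) :
    (l i : ℤ) = 1 + f (Sum.inl i) * ∑ k ∈ univ.filter ((pathGraph n).Adj i), f (Sum.inl k) := by
  refine eq_one_add_mul_of_add_eq_mul (hf.1.caterpillar_spine_balance i) fun hi => ?_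
  rcases hf.2 i (mod_cast hi) with h | h <;> simp [h]

end Caterpillar

section PathGraph

variable {n : ℕ}

open SimpleGraph
open scoped Classical

theorem pathGraph_filter_adj_of_val_eq_zero {i k : Fin n} (hi : i.val = 0)
    (hk : i.val + 1 = k.val) : univ.filter ((pathGraph n).Adj i) = {k} := by
  ext v
  simp only [mem_filter, mem_univ, true_and, mem_singleton, pathGraph_adj, Fin.ext_iff]
  omega

theorem pathGraph_filter_adj_of_val_add_one_eq {i j : Fin n} (hi : i.val + 1 = n)
    (hj : j.val + 1 = i.val) : univ.filter ((pathGraph n).Adj i) = {j} := by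
  ext v
  have := v.isLt
  simp only [mem_filter, mem_univ, true_and, mem_singleton, pathGraph_adj, Fin.ext_iff]
  omega

theorem pathGraph_filter_adj_eq_pair {i j k : Fin n} (hj : j.val + 1 = i.val)
    (hk : i.val + 1 = k.val) : univ.filter ((pathGraph n).Adj i) = {j, k} := by
  ext v
  simp only [mem_filter, mem_univ, true_and, mem_insert, mem_singleton, pathGraph_adj,
    Fin.ext_iff]
  omega

end PathGraph

/-- For an MBDF on the caterpillar C_n (n ≥ 2) with spine labels x_i = f(a_i):
l_1 = 1 + x_1 x_2, l_n = 1 + x_{n-1} x_n, and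
l_i = 1 + x_{i-1} x_i + x_i x_{i+1} for interior spine vertices. -/
theorem caterpillar_leaf_formulas (n : ℕ) (hn : 2 ≤ n) (l : Fin n → ℕ)
    (f : CatVtx n l → ℤ) (hf : IsMBDF n l f) :
    ((l ⟨0, by omega⟩ : ℤ) =
        1 + f (Sum.inl ⟨0, by omega⟩) * f (Sum.inl ⟨1, by omega⟩)) ∧
    ((l ⟨n - 1, by omega⟩ : ℤ) =
        1 + f (Sum.inl ⟨n - 2, by omega⟩) * f (Sum.inl ⟨n - 1, by omega⟩)) ∧
    (∀ (i : ℕ) (_h1 : 1 ≤ i) (_h2 : i ≤ n - 2),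
      (l ⟨i, by omega⟩ : ℤ) =
        1 + f (Sum.inl ⟨i - 1, by omega⟩) * f (Sum.inl ⟨i, by omega⟩) +
          f (Sum.inl ⟨i, by omega⟩) * f (Sum.inl ⟨i + 1, by omega⟩)) := by
  classical
  refine ⟨?_, ?_, fun i h₁ h₂ => ?_⟩
  · rw [hf.leafCount_eq, pathGraph_filter_adj_of_val_eq_zero (k := ⟨1, hn⟩) rfl rfl,
      sum_singleton]
  · rw [hf.leafCount_eq, pathGraph_filter_adj_of_val_add_one_eq (j := ⟨n - 2, by omega⟩)
      (by dsimp only; omega) (by dsimp only; omega), sum_singleton, mul_comm]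
  · have hne : (⟨i - 1, by omega⟩ : Fin n) ≠ ⟨i + 1, by omega⟩ :=
      Fin.ne_of_val_ne (by dsimp only; omega)
    rw [hf.leafCount_eq, pathGraph_filter_adj_eq_pair (j := ⟨i - 1, by omega⟩)
      (k := ⟨i + 1, by omega⟩) (by dsimp only; omega) rfl, sum_pair hne]
    ring
end

section
/- If a caterpillar graph C_n with n ≥ 2 spine vertices admits a non-zero modified balanced dominating function, then its total number of leaves L(C_n) satisfies L(C_n) ≡ 3n − 2 (mod 4). -/
open Finset

/-!
Write `x₁, …, xₙ` for the spine labels, padded with `x₀ = xₙ₊₁ = 0`. A leaf carries the opposite of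
the label of its spine vertex, so balance at `aₖ` reads `xₖ₋₁ + xₖ₊₁ = (lₖ - 1) xₖ`. Since
`xₖ ∈ {-1, 0, 1}` and `lₖ = 1` whenever `xₖ = 0`, this gives `lₖ = 1 + xₖ (xₖ₋₁ + xₖ₊₁)`, whence
`L = n + 2 ∑ xₖ xₖ₊₁`. The recurrence spreads two consecutive zeros over the whole spine, so for
`f ≠ 0` no two consecutive `xₖ` vanish (in particular `x₁, xₙ ≠ 0`). Then
`xₖ xₖ₊₁ ≡ xₖ + xₖ₊₁ - 1 (mod 2)`, and the sum telescopes to `∑ xₖ xₖ₊₁ ≡ n - 1 (mod 2)`.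
-/

section IntSeq

variable {x : ℕ → ℤ}

theorem eq_zero_of_consecutive_zeros {N : ℕ} (c : Fin N → ℤ)
    (hrec : ∀ k : Fin N, x k + x (k + 2) = c k * x (k + 1))
    {j : ℕ} (hj : j ≤ N) (h₀ : x j = 0) (h₁ : x (j + 1) = 0) {i : ℕ} (hi : i ≤ N + 1) :
    x i = 0 := by
  have forward : ∀ i, j ≤ i → i ≤ N → x i = 0 ∧ x (i + 1) = 0 := by
    intro i hji
    induction i, hji using Nat.le_induction with
    | base => exact fun _ => ⟨h₀, h₁⟩
    | succ i _ ih =>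
      intro hiN
      obtain ⟨hx, hx'⟩ := ih (by omega)
      have := hrec ⟨i, by omega⟩
      simp only [hx, hx', mul_zero, zero_add] at this
      exact ⟨hx', this⟩
  have backward : ∀ i, i ≤ j → x i = 0 ∧ x (i + 1) = 0 := by
    intro i hij
    induction hij using Nat.decreasingInduction with
    | self => exact ⟨h₀, h₁⟩
    | of_succ i hij ih =>
      have := hrec ⟨i, by omega⟩
      simp only [ih.1, ih.2, mul_zero, add_zero] at this
      exact ⟨this, ih.1⟩
  rcases Nat.lt_or_ge i (N + 1) with hi' | hi'
  · rcases le_total j i with hji | hij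
    · exact (forward i hji (by omega)).1
    · exact (backward i hij).1
  · obtain rfl : i = N + 1 := by omega
    exact (forward N hj le_rfl).2

theorem sum_range_mul_add_eq_two_mul (m : ℕ) (h₀ : x 0 = 0) (hm : x (m + 2) = 0) :
    ∑ k ∈ range (m + 1), x (k + 1) * (x k + x (k + 2))
      = 2 * ∑ k ∈ range m, x (k + 1) * x (k + 2) := by
  rw [sum_congr rfl fun k _ => mul_add _ _ _, sum_add_distrib, sum_range_succ',
    sum_range_succ (fun k => x (k + 1) * x (k + 2)), h₀, hm]
  simp only [mul_zero, add_zero, two_mul, mul_comm (x (_ + 1 + 1))]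

theorem even_sum_range_mul_succ_sub_one (m : ℕ) (h₀ : Odd (x 0)) (hm : Odd (x m))
    (h : ∀ k < m, Odd (x k) ∨ Odd (x (k + 1))) :
    Even (∑ k ∈ range m, (x k * x (k + 1) - 1)) := by
  have key : ∀ k ∈ range m, x k * x (k + 1) - 1
      = (x k - 1) * (x (k + 1) - 1) + 2 * (x k - 1) + (x (k + 1) - x k) := fun k _ => by ring
  rw [sum_congr rfl key, sum_add_distrib, sum_range_sub, sum_add_distrib, ← mul_sum]
  refine ((Even.add ?_ (even_two_mul _)).add ?_)
  · refine even_sum _ fun k hk => ?_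
    rcases h k (mem_range.mp hk) with hk | hk
    · exact (hk.sub_odd odd_one).mul_right _
    · exact (hk.sub_odd odd_one).mul_left _
  · exact hm.sub_odd h₀

end IntSeq

namespace Caterpillar

variable {n : ℕ} {l : Fin n → ℕ}

theorem inr_adj_iff (i : Fin n) (j : Fin (l i)) (u : CatVtx n l) :
    (caterpillar n l).Adj (Sum.inr ⟨i, j⟩) u ↔ u = Sum.inl i := by
  simp only [caterpillar, SimpleGraph.fromRel_adj]
  constructor
  · rintro ⟨-, (⟨_, _, h, -⟩ | ⟨_, _, h, -⟩) | (⟨_, _, -, h, -⟩ | ⟨a, b, rfl, h⟩)⟩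
    all_goals cases h <;> rfl
  · rintro rfl
    exact ⟨Sum.inr_ne_inl, Or.inr (Or.inr ⟨i, j, rfl, rfl⟩)⟩

theorem inl_adj_inl_iff (i i' : Fin n) :
    (caterpillar n l).Adj (Sum.inl i) (Sum.inl i') ↔ (i' : ℕ) = i + 1 ∨ (i : ℕ) = i' + 1 := by
  simp only [caterpillar, SimpleGraph.fromRel_adj]
  constructor
  · rintro ⟨-, (⟨_, _, h, h', hs⟩ | ⟨_, _, -, h'⟩) | (⟨_, _, h, h', hs⟩ | ⟨_, _, -, h'⟩)⟩
    all_goals cases h' <;> cases h <;> omega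
  · intro h
    refine ⟨fun h' => by cases h'; omega, ?_⟩
    rcases h with h | h
    · exact Or.inl (Or.inl ⟨i, i', rfl, rfl, h⟩)
    · exact Or.inr (Or.inl ⟨i', i, rfl, rfl, h⟩)

theorem inl_adj_inr_iff (i : Fin n) (v : Σ i : Fin n, Fin (l i)) :
    (caterpillar n l).Adj (Sum.inl i) (Sum.inr v) ↔ v.1 = i := by
  obtain ⟨a, b⟩ := v
  rw [SimpleGraph.adj_comm, inr_adj_iff, Sum.inl.injEq, eq_comm]

/-- `spineSeq f j = f (a_j)` for `1 ≤ j ≤ n`, padded with zeros at `0` and beyond `n`, so that the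
end vertices of the spine satisfy the same recurrence as the interior ones. -/
def spineSeq (f : CatVtx n l → ℤ) : ℕ → ℤ
  | 0 => 0
  | j + 1 => if h : j < n then f (Sum.inl ⟨j, h⟩) else 0

variable {f : CatVtx n l → ℤ}

@[simp]
theorem spineSeq_zero : spineSeq f 0 = 0 := rfl

theorem spineSeq_succ (k : Fin n) : spineSeq f (k + 1) = f (Sum.inl k) := by
  simp [spineSeq]

theorem spineSeq_of_lt {j : ℕ} (h : n < j) : spineSeq f j = 0 := by
  obtain ⟨j, rfl⟩ := Nat.exists_eq_add_one.mpr (Nat.zero_lt_of_lt h)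
  simp only [spineSeq, dif_neg (show ¬j < n by omega)]

theorem sum_ite_succ_eq_spineSeq (m : ℕ) :
    ∑ i : Fin n, (if (i : ℕ) + 1 = m then f (Sum.inl i) else 0) = spineSeq f m := by
  cases m with
  | zero => simp
  | succ m =>
    simp only [Nat.add_right_cancel_iff, spineSeq]
    split_ifs with hm
    · simp_rw [show ∀ i : Fin n, (i : ℕ) = m ↔ i = ⟨m, hm⟩ from fun i => by rw [Fin.ext_iff]]
      exact Fintype.sum_ite_eq' _ _
    · exact sum_eq_zero fun i _ => if_neg (by omega)

theorem closedSum_inr (i : Fin n) (j : Fin (l i)) :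
    closedSum (caterpillar n l) f (Sum.inr ⟨i, j⟩) = f (Sum.inr ⟨i, j⟩) + f (Sum.inl i) := by
  rw [closedSum, sum_filter]
  simp only [inr_adj_iff, Fintype.sum_ite_eq']

theorem closedSum_inl (k : Fin n) :
    closedSum (caterpillar n l) f (Sum.inl k)
      = spineSeq f k + spineSeq f (k + 2) + f (Sum.inl k)
        + ∑ j : Fin (l k), f (Sum.inr ⟨k, j⟩) := by
  rw [closedSum, sum_filter, Fintype.sum_sum_type, Fintype.sum_sigma]
  simp only [inl_adj_inl_iff, inl_adj_inr_iff, sum_ite_irrel, sum_const_zero, Fintype.sum_ite_eq']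
  have hspine : ∀ i : Fin n, (if (i : ℕ) = k + 1 ∨ (k : ℕ) = i + 1 then f (Sum.inl i) else 0)
      = (if (i : ℕ) + 1 = k + 2 then f (Sum.inl i) else 0)
        + (if (i : ℕ) + 1 = k then f (Sum.inl i) else 0) := fun i => by
    split_ifs <;> omega
  rw [sum_congr rfl fun i _ => hspine i, sum_add_distrib, sum_ite_succ_eq_spineSeq,
    sum_ite_succ_eq_spineSeq]
  ring

theorem leaf_eq_neg_spine (hf : IsBDF (caterpillar n l) f) (i : Fin n) (j : Fin (l i)) :
    f (Sum.inr ⟨i, j⟩) = -f (Sum.inl i) := by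
  have := hf.2 (Sum.inr ⟨i, j⟩)
  rw [closedSum_inr] at this
  linarith

theorem spineSeq_add_spineSeq (hf : IsBDF (caterpillar n l) f) (k : Fin n) :
    spineSeq f k + spineSeq f (k + 2) = ((l k : ℤ) - 1) * spineSeq f (k + 1) := by
  have := hf.2 (Sum.inl k)
  simp only [closedSum_inl, leaf_eq_neg_spine hf, sum_const, card_univ, Fintype.card_fin,
    nsmul_eq_mul] at this
  rw [spineSeq_succ]
  linear_combination this

theorem eq_zero_of_spine_eq_zero (hf : IsBDF (caterpillar n l) f)
    (h : ∀ k, f (Sum.inl k) = 0) : f = 0 := by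
  funext v
  rcases v with k | ⟨i, j⟩
  · exact h k
  · simp [leaf_eq_neg_spine hf, h]

theorem spineSeq_mem (hf : IsBDF (caterpillar n l) f) (j : ℕ) :
    spineSeq f j = -1 ∨ spineSeq f j = 0 ∨ spineSeq f j = 1 := by
  rcases j with _ | j
  · simp
  · by_cases hj : j < n
    · simpa only [spineSeq, dif_pos hj] using hf.1 _
    · simp [spineSeq, dif_neg hj]

theorem odd_spineSeq_iff (hf : IsBDF (caterpillar n l) f) (j : ℕ) :
    Odd (spineSeq f j) ↔ spineSeq f j ≠ 0 := by
  rcases spineSeq_mem hf j with h | h | h <;> simp [h]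

end Caterpillar

namespace IsMBDF

open Caterpillar

variable {n : ℕ} {l : Fin n → ℕ} {f : CatVtx n l → ℤ}

theorem leaf_count_eq (hf : IsMBDF n l f) (k : Fin n) :
    (l k : ℤ) = 1 + spineSeq f (k + 1) * (spineSeq f k + spineSeq f (k + 2)) := by
  rw [spineSeq_add_spineSeq hf.1, spineSeq_succ]
  by_cases hl : l k = 1
  · simp [hl]
  · rcases hf.2 k hl with h | h <;> simp [h]

theorem odd_spineSeq_or_odd_spineSeq_succ (hf : IsMBDF n l f) (hnz : ∃ v, f v ≠ 0) {j : ℕ}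
    (hj : j ≤ n) : Odd (spineSeq f j) ∨ Odd (spineSeq f (j + 1)) := by
  simp only [odd_spineSeq_iff hf.1]
  by_contra! h
  obtain ⟨v, hv⟩ := hnz
  refine hv (congrFun (eq_zero_of_spine_eq_zero hf.1 fun k => ?_) v)
  rw [← spineSeq_succ (f := f)]
  exact eq_zero_of_consecutive_zeros _ (spineSeq_add_spineSeq hf.1) hj h.1 h.2 (by omega)

end IsMBDF

open Caterpillar in
theorem caterpillar_leaf_congruence_general (n : ℕ) (l : Fin n → ℕ)
    (f : CatVtx n l → ℤ) (hf : IsMBDF n l f) (hnz : ∃ v, f v ≠ 0) :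
    (∑ i : Fin n, (l i : ℤ)) % 4 = (3 * (n : ℤ) - 2) % 4 := by
  obtain ⟨m, rfl⟩ : ∃ m, n = m + 1 :=
    Nat.exists_eq_add_one.mpr (by obtain ⟨k | ⟨k, -⟩, -⟩ := hnz <;> exact k.pos)
  have hodd := fun j (hj : j ≤ m + 1) => hf.odd_spineSeq_or_odd_spineSeq_succ hnz hj
  have hleaves : ∑ i : Fin (m + 1), (l i : ℤ)
      = (m + 1) + 2 * ∑ k ∈ range m, spineSeq f (k + 1) * spineSeq f (k + 2) := by
    rw [sum_congr rfl fun k _ => hf.leaf_count_eq k,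
      Fin.sum_univ_eq_sum_range
        (fun k => 1 + spineSeq f (k + 1) * (spineSeq f k + spineSeq f (k + 2))),
      sum_add_distrib, sum_range_mul_add_eq_two_mul m spineSeq_zero (spineSeq_of_lt (by omega))]
    simp
  obtain ⟨t, ht⟩ : Even (∑ k ∈ range m, (spineSeq f (k + 1) * spineSeq f (k + 2) - 1)) :=
    even_sum_range_mul_succ_sub_one (x := fun j => spineSeq f (j + 1)) m
      ((hodd 0 (by omega)).resolve_left (by simp))
      ((hodd (m + 1) le_rfl).resolve_right (by simp [spineSeq_of_lt]))
      fun k hk => hodd (k + 1) (by omega)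
  simp only [sum_sub_distrib, sum_const, card_range, nsmul_one] at ht
  push_cast
  omega

/-- If a caterpillar C_n (n ≥ 2) admits a non-zero modified balanced dominating
function, then its total number of leaves satisfies L(C_n) ≡ 3n - 2 (mod 4). -/
theorem caterpillar_leaf_congruence (n : ℕ) (hn : 2 ≤ n) (l : Fin n → ℕ)
    (f : CatVtx n l → ℤ) (hf : IsMBDF n l f) (hnz : ∃ v, f v ≠ 0) :
    (∑ i : Fin n, (l i : ℤ)) % 4 = (3 * (n : ℤ) - 2) % 4 :=
  caterpillar_leaf_congruence_general n l f hf hnz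
end

section
/- Let x_1,...,x_n ∈ {-1,0,1} with x_1 ≠ 0, x_n ≠ 0, and no two consecutive x_i, x_{i+1} both zero. Then n + 2·Σ_{i=1}^{n−1} x_i x_{i+1} ≡ 3n − 2 (mod 4). -/
/-! Reduce modulo 2. Over `𝔽₂`, a product `a * b` with `a, b` not both zero equals `a + b + 1`,
so `∑ x_i x_{i+1} ≡ ∑ (x_i + x_{i+1} + 1)`. The two copies of `∑ x_i` cancel up to the endpoint
terms `x_0` and `x_{n-1}`, which are both `1`, leaving `n - 1`. Hence `∑ x_i x_{i+1} = n - 1 + 2k`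
and `n + 2 ∑ x_i x_{i+1} = 3n - 2 + 4k`. -/

open Finset

namespace ZMod

theorem mul_eq_add_add_one_of_ne_zero_or_ne_zero {a b : ZMod 2} (h : a ≠ 0 ∨ b ≠ 0) :
    a * b = a + b + 1 := by
  revert a b; decide

theorem eq_of_ne_zero_of_ne_zero {a b : ZMod 2} (ha : a ≠ 0) (hb : b ≠ 0) : a = b := by
  revert a b; decide

theorem sum_range_mul_succ_eq {m : ℕ} {y : ℕ → ZMod 2} (hfirst : y 0 ≠ 0) (hlast : y m ≠ 0)
    (hcons : ∀ i < m, y i ≠ 0 ∨ y (i + 1) ≠ 0) :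
    ∑ i ∈ range m, y i * y (i + 1) = m := by
  have hshift : ∑ i ∈ range m, y (i + 1) = ∑ i ∈ range m, y i := by
    have h := (sum_range_succ' y m).symm.trans (sum_range_succ y m)
    rwa [eq_of_ne_zero_of_ne_zero hfirst hlast, add_left_inj] at h
  calc ∑ i ∈ range m, y i * y (i + 1)
      = ∑ i ∈ range m, (y i + y (i + 1) + 1) :=
        sum_congr rfl fun i hi ↦ mul_eq_add_add_one_of_ne_zero_or_ne_zero (hcons i (mem_range.1 hi))
    _ = (2 : ZMod 2) * ∑ i ∈ range m, y i + m := by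
        simp only [sum_add_distrib, hshift, sum_const, card_range, nsmul_eq_mul, mul_one]; ring
    _ = m := by rw [show (2 : ZMod 2) = 0 from rfl, zero_mul, zero_add]

end ZMod

theorem Int.cast_zmod_two_ne_zero_of_ne_zero {a : ℤ} (ha : a = -1 ∨ a = 0 ∨ a = 1) (h : a ≠ 0) :
    (a : ZMod 2) ≠ 0 := by
  rcases ha with rfl | rfl | rfl <;> simp_all

/-- Key arithmetic step for the caterpillar leaf-count congruence: if
x_1,...,x_n ∈ {-1,0,1}, the first and last are non-zero, and no two consecutive
entries are both zero, then n + 2·Σ x_i x_{i+1} ≡ 3n - 2 (mod 4). -/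
theorem caterpillar_arith_step (n : ℕ) (hn : 1 ≤ n) (x : ℕ → ℤ)
    (hx : ∀ i < n, x i = -1 ∨ x i = 0 ∨ x i = 1)
    (h0 : x 0 ≠ 0) (hlast : x (n - 1) ≠ 0)
    (hcons : ∀ i, i + 1 < n → ¬(x i = 0 ∧ x (i + 1) = 0)) :
    ((n : ℤ) + 2 * ∑ i ∈ Finset.range (n - 1), x i * x (i + 1)) % 4 =
      (3 * (n : ℤ) - 2) % 4 := by
  have hodd : ∀ i < n, x i ≠ 0 → (x i : ZMod 2) ≠ 0 := fun i hi ↦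
    Int.cast_zmod_two_ne_zero_of_ne_zero (hx i hi)
  have hsum : ((∑ i ∈ range (n - 1), x i * x (i + 1) : ℤ) : ZMod 2) = ((n - 1 : ℕ) : ℤ) := by
    push_cast
    refine ZMod.sum_range_mul_succ_eq (hodd 0 (by omega) h0) (hodd _ (by omega) hlast) ?_
    intro i hi
    by_cases hxi : x i = 0
    · exact .inr (hodd _ (by omega) fun h ↦ hcons i (by omega) ⟨hxi, h⟩)
    · exact .inl (hodd i (by omega) hxi)
  obtain ⟨k, hk⟩ := (ZMod.intCast_eq_intCast_iff_dvd_sub _ _ 2).1 hsum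
  omega
end

section
/- Let f be a balanced dominating function on the grid graph Grid_{m×n} with 3 ≤ m ≤ n. If f vanishes on the closed neighborhood of some corner vertex (i.e., on v_{1,1}, v_{1,2}, v_{2,1}, up to symmetry), then f is identically zero. -/
open Finset

/-- The grid graph on an m × n lattice: vertices (i,j), edges between horizontally
or vertically adjacent lattice points. -/
def gridGraph (m n : ℕ) : SimpleGraph (Fin m × Fin n) :=
  SimpleGraph.fromRel (fun p q =>
    (p.1 = q.1 ∧ (q.2 : ℕ) = (p.2 : ℕ) + 1) ∨
    (p.2 = q.2 ∧ (q.1 : ℕ) = (p.1 : ℕ) + 1))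

/-!
Extend `f` by zero to `ℤ × ℤ`. The balance condition at `(i, j)` expresses `F (i + 1, j)`
through rows `i - 1` and `i`, so zeros propagate downwards: if row `0` vanishes up to column
`c`, then `F (r, t) = 0` whenever `r + t ≤ c`, and if all of row `0` vanishes, so does `F`.
Row `0` vanishes by induction along it: if it vanishes up to column `c ≥ 1`, the balance
conditions in rows `0`, `1`, `2` give `F (3, c - 1) = -(3a + b)` with `a = F (0, c + 1)` and
`b = F (0, c + 2)`, and `|F| ≤ 1` forces `a = 0`. A reflection of the grid moves any corner to
the origin.
-/

def latticeUnitVectors : Finset (ℤ × ℤ) := {(-1, 0), (1, 0), (0, -1), (0, 1)}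

def latticeClosedSum (F : ℤ × ℤ → ℤ) (p : ℤ × ℤ) : ℤ :=
  F p + ∑ d ∈ latticeUnitVectors, F (p + d)

def gridBox (m n : ℕ) : Set (ℤ × ℤ) := Set.Ico 0 (m : ℤ) ×ˢ Set.Ico 0 (n : ℤ)

structure IsBalancedOnBox (m n : ℕ) (F : ℤ × ℤ → ℤ) : Prop where
  eq_zero_of_notMem : ∀ p ∉ gridBox m n, F p = 0
  latticeClosedSum_eq_zero : ∀ p ∈ gridBox m n, latticeClosedSum F p = 0

namespace IsBalancedOnBox

variable {m n : ℕ} {F : ℤ × ℤ → ℤ}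

lemma eq_zero_of_fst_neg (hF : IsBalancedOnBox m n F) {i : ℤ} (hi : i < 0) (j : ℤ) :
    F (i, j) = 0 :=
  hF.eq_zero_of_notMem _ (by simp [gridBox]; omega)

lemma closedSum_eq_zero (hF : IsBalancedOnBox m n F) {i j : ℤ} (hi : 0 ≤ i) (hi' : i < m)
    (hj : 0 ≤ j) (hj' : j < n) :
    F (i, j) + F (i - 1, j) + F (i + 1, j) + F (i, j - 1) + F (i, j + 1) = 0 := by
  have := hF.latticeClosedSum_eq_zero (i, j) (by simp [gridBox]; omega)
  simpa [latticeClosedSum, latticeUnitVectors, Finset.sum_insert, ← sub_eq_add_neg, add_assoc]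
    using this

/-- If `(i, j)` is outside the box, so is `(i + 1, j)`: no balance condition is needed there. -/
lemma eq_zero_of_closedNbhd_above (hF : IsBalancedOnBox m n F) {i j : ℤ} (hi : 0 ≤ i)
    (h₁ : F (i - 1, j) = 0) (h₂ : F (i, j) = 0) (h₃ : F (i, j - 1) = 0) (h₄ : F (i, j + 1) = 0) :
    F (i + 1, j) = 0 := by
  by_cases hp : (i, j) ∈ gridBox m n
  · simp only [gridBox, Set.mem_prod, Set.mem_Ico] at hp
    have := hF.closedSum_eq_zero hp.1.1 hp.1.2 hp.2.1 hp.2.2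
    linarith
  · refine hF.eq_zero_of_notMem _ ?_
    simp only [gridBox, Set.mem_prod, Set.mem_Ico] at hp ⊢
    omega

lemma eq_zero_of_add_le (hF : IsBalancedOnBox m n F) {c : ℤ} (h : ∀ t ≤ c, F (0, t) = 0)
    (r : ℕ) (t : ℤ) (hrt : r + t ≤ c) : F (r, t) = 0 := by
  suffices H : ∀ r : ℕ, (∀ t, (r : ℤ) - 1 + t ≤ c → F (r - 1, t) = 0) ∧
      (∀ t, r + t ≤ c → F (r, t) = 0) from (H r).2 t hrt
  intro r
  induction r with
  | zero => exact ⟨fun t _ => hF.eq_zero_of_fst_neg (by omega) t, by simpa using h⟩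
  | succ r ih =>
    refine ⟨by simpa using ih.2, fun t ht => ?_⟩
    push_cast at ht ⊢
    exact hF.eq_zero_of_closedNbhd_above r.cast_nonneg (ih.1 t (by omega)) (ih.2 t (by omega))
      (ih.2 _ (by omega)) (ih.2 _ (by omega))

lemma eq_zero_of_row_zero (hF : IsBalancedOnBox m n F) (h : ∀ t, F (0, t) = 0) (p : ℤ × ℤ) :
    F p = 0 := by
  obtain ⟨i, t⟩ := p
  rcases lt_or_ge i 0 with hi | hi
  · exact hF.eq_zero_of_fst_neg hi t
  · lift i to ℕ using hi
    exact hF.eq_zero_of_add_le (c := i + t) (fun t _ => h t) i t le_rfl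

lemma row_zero_succ_eq_zero (hF : IsBalancedOnBox m n F) (hm : 3 ≤ m) (hbound : ∀ p, |F p| ≤ 1)
    {c : ℤ} (hc : 1 ≤ c) (h : ∀ t ≤ c, F (0, t) = 0) : F (0, c + 1) = 0 := by
  by_cases hcn : c + 1 < n
  swap
  · exact hF.eq_zero_of_notMem _ (by simp [gridBox]; omega)
  have hz := hF.eq_zero_of_add_le h
  have e₁ := hF.closedSum_eq_zero (i := 0) (j := c) (by omega) (by omega) (by omega) (by omega)
  have e₂ := hF.closedSum_eq_zero (i := 0) (j := c + 1) (by omega) (by omega) (by omega) hcn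
  have e₃ := hF.closedSum_eq_zero (i := 1) (j := c - 1) (by omega) (by omega) (by omega) (by omega)
  have e₄ := hF.closedSum_eq_zero (i := 1) (j := c) (by omega) (by omega) (by omega) (by omega)
  have e₅ := hF.closedSum_eq_zero (i := 2) (j := c - 1) (by omega) (by omega) (by omega) (by omega)
  have z₁ := hz 1 (c - 1) (by omega)
  have z₂ := hz 1 (c - 2) (by omega)
  have z₃ := hz 2 (c - 2) (by omega)
  have z₄ := h c le_rfl
  have z₅ := h (c - 1) (by omega)
  have z₆ := hF.eq_zero_of_fst_neg (i := -1) (by omega) c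
  have z₇ := hF.eq_zero_of_fst_neg (i := -1) (by omega) (c + 1)
  -- With `a = F (0, c + 1)` and `b = F (0, c + 2)` these give in turn `F (1, c) = -a`,
  -- `F (1, c + 1) = -(a + b)`, `F (2, c - 1) = a`, `F (2, c) = 2a + b`, `F (3, c - 1) = -(3a + b)`.
  have key : F (3, c - 1) + 3 * F (0, c + 1) + F (0, c + 2) = 0 := by
    ring_nf at e₁ e₂ e₃ e₄ e₅ z₁ z₂ z₃ z₄ z₅ z₆ z₇ ⊢
    linarith
  have h₁ := abs_le.1 (hbound (3, c - 1))
  have h₂ := abs_le.1 (hbound (0, c + 2))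
  omega

lemma row_zero_eq_zero (hF : IsBalancedOnBox m n F) (hm : 3 ≤ m) (hbound : ∀ p, |F p| ≤ 1)
    (h : ∀ t ≤ 1, F (0, t) = 0) (t : ℤ) : F (0, t) = 0 := by
  refine Int.leInduction (motive := fun c _ => ∀ t ≤ c, F (0, t) = 0) h
    (fun c hc ih t ht => ?_) (max t 1) (le_max_right t 1) t (le_max_left t 1)
  rcases ht.lt_or_eq with ht | rfl
  · exact ih t (by omega)
  · exact hF.row_zero_succ_eq_zero hm hbound hc ih

end IsBalancedOnBox

def gridToLattice (m n : ℕ) (v : Fin m × Fin n) : ℤ × ℤ := ((v.1 : ℕ), (v.2 : ℕ))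

lemma gridToLattice_injective (m n : ℕ) : Function.Injective (gridToLattice m n) := by
  rintro ⟨a, b⟩ ⟨c, d⟩ h
  simp only [gridToLattice, Prod.mk.injEq, Nat.cast_inj] at h
  ext <;> simp [h]

lemma range_gridToLattice (m n : ℕ) : Set.range (gridToLattice m n) = gridBox m n := by
  ext ⟨i, j⟩
  constructor
  · rintro ⟨v, hv⟩
    simp only [gridToLattice, Prod.mk.injEq] at hv
    simp only [gridBox, Set.mem_prod, Set.mem_Ico]
    omega
  · rintro ⟨⟨hi, hi'⟩, hj, hj'⟩
    exact ⟨(⟨i.toNat, by omega⟩, ⟨j.toNat, by omega⟩), by simp [gridToLattice]; omega⟩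

lemma gridGraph_adj_iff (m n : ℕ) (v u : Fin m × Fin n) :
    (gridGraph m n).Adj v u ↔ gridToLattice m n u - gridToLattice m n v ∈ latticeUnitVectors := by
  simp only [gridGraph, SimpleGraph.fromRel_adj, ne_eq, latticeUnitVectors, gridToLattice,
    Prod.ext_iff, Fin.ext_iff, Finset.mem_insert, Finset.mem_singleton, Prod.fst_sub, Prod.snd_sub]
  omega

section ExtendByZero

open Function

variable {V W M : Type*} [Fintype V] [AddCommMonoid M] {φ : V → W}

open scoped Classical in
lemma Function.Injective.extend_zero_eq_sum (hφ : Injective φ) (f : V → M) (w : W) :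
    extend φ f 0 w = ∑ u, if φ u = w then f u else 0 := by
  by_cases hw : ∃ v, φ v = w
  · obtain ⟨v, rfl⟩ := hw
    simp only [hφ.extend_apply, hφ.eq_iff, Finset.sum_ite_eq', Finset.mem_univ, if_true]
  · rw [extend_apply' _ _ _ hw, Pi.zero_apply]
    exact (Finset.sum_eq_zero fun u _ => if_neg fun h => hw ⟨u, h⟩).symm

open scoped Classical in
lemma SimpleGraph.sum_adj_eq_sum_extend [AddCommGroup W] (G : SimpleGraph V) (hφ : Injective φ)
    {D : Finset W} (hadj : ∀ v u, G.Adj v u ↔ φ u - φ v ∈ D) (f : V → M) (v : V) :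
    ∑ u ∈ Finset.univ.filter (fun u => G.Adj v u), f u = ∑ d ∈ D, extend φ f 0 (φ v + d) := by
  simp only [hφ.extend_zero_eq_sum]
  rw [Finset.sum_comm, Finset.sum_filter]
  refine Finset.sum_congr rfl fun u _ => ?_
  have hstep : ∀ d, φ u = φ v + d ↔ d = φ u - φ v := fun d => by
    rw [eq_sub_iff_add_eq', eq_comm]
  simp only [hstep, Finset.sum_ite_eq', hadj]

end ExtendByZero

lemma closedSum_gridGraph (m n : ℕ) (f : Fin m × Fin n → ℤ) (v : Fin m × Fin n) :
    closedSum (gridGraph m n) f v =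
      latticeClosedSum (Function.extend (gridToLattice m n) f 0) (gridToLattice m n v) := by
  have hφ := gridToLattice_injective m n
  rw [closedSum, (gridGraph m n).sum_adj_eq_sum_extend hφ (gridGraph_adj_iff m n),
    latticeClosedSum, hφ.extend_apply]

namespace IsBDF

variable {V : Type*} [Fintype V]

lemma abs_extend_le_one {W : Type*} {G : SimpleGraph V} {f : V → ℤ} (hf : IsBDF G f) (φ : V → W)
    (w : W) : |Function.extend φ f 0 w| ≤ 1 := by
  classical
  rw [Function.extend_def]
  split_ifs
  · rcases hf.1 _ with h | h | h <;> rw [h] <;> norm_num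
  · simp

lemma comp_iso {V' : Type*} [Fintype V'] {G : SimpleGraph V} {G' : SimpleGraph V'} {f : V' → ℤ}
    (hf : IsBDF G' f) (e : G ≃g G') : IsBDF G (f ∘ e) := by
  refine ⟨fun v => hf.1 (e v), fun v => ?_⟩
  rw [← hf.2 (e v), closedSum, closedSum]
  congr 1
  exact Finset.sum_equiv e.toEquiv (fun u => by simpa using e.map_adj_iff.symm) (by simp)

end IsBDF

section Grid

variable {m n : ℕ} {f : Fin m × Fin n → ℤ}

lemma IsBDF.isBalancedOnBox_extend (hf : IsBDF (gridGraph m n) f) :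
    IsBalancedOnBox m n (Function.extend (gridToLattice m n) f 0) where
  eq_zero_of_notMem p hp := by
    rw [← range_gridToLattice] at hp
    exact Function.extend_apply' _ _ _ hp
  latticeClosedSum_eq_zero p hp := by
    obtain ⟨v, rfl⟩ := (range_gridToLattice m n).symm ▸ hp
    rw [← closedSum_gridGraph]
    exact hf.2 v

theorem IsBDF.eq_zero_of_closedNbhd_origin (hm : 3 ≤ m) (hf : IsBDF (gridGraph m n) f)
    (o : Fin m × Fin n) (ho : gridToLattice m n o = (0, 0)) (h₀ : f o = 0)
    (hadj : ∀ u, (gridGraph m n).Adj o u → f u = 0) (v : Fin m × Fin n) : f v = 0 := by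
  have hφ := gridToLattice_injective m n
  have hF := hf.isBalancedOnBox_extend
  have hrow : ∀ t ≤ 1, Function.extend (gridToLattice m n) f 0 (0, t) = 0 := by
    intro t ht
    by_cases hu : ∃ u, gridToLattice m n u = (0, t)
    · obtain ⟨u, hu⟩ := hu
      rw [← hu, hφ.extend_apply]
      have ht' : t = 0 ∨ t = 1 := by
        simp only [gridToLattice, Prod.mk.injEq] at hu
        omega
      rcases ht' with rfl | rfl
      · rwa [hφ (hu.trans ho.symm)]
      · refine hadj u ((gridGraph_adj_iff m n o u).2 ?_)
        simp [hu, ho, latticeUnitVectors]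
    · exact Function.extend_apply' _ _ _ hu
  have := hF.eq_zero_of_row_zero
    (hF.row_zero_eq_zero hm (hf.abs_extend_le_one _) hrow) (gridToLattice m n v)
  rwa [hφ.extend_apply] at this

def gridGraph.reflectFst : gridGraph m n ≃g gridGraph m n where
  toEquiv := Fin.revPerm.prodCongr (Equiv.refl _)
  map_rel_iff' {v u} := by
    simp only [gridGraph_adj_iff, latticeUnitVectors, gridToLattice, Equiv.prodCongr_apply,
      Fin.revPerm_apply, Fin.val_rev, Finset.mem_insert, Finset.mem_singleton, Prod.ext_iff,
      Prod.fst_sub, Prod.snd_sub, Prod.map_fst, Prod.map_snd, Equiv.refl_apply]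
    omega

def gridGraph.reflectSnd : gridGraph m n ≃g gridGraph m n where
  toEquiv := (Equiv.refl _).prodCongr Fin.revPerm
  map_rel_iff' {v u} := by
    simp only [gridGraph_adj_iff, latticeUnitVectors, gridToLattice, Equiv.prodCongr_apply,
      Fin.revPerm_apply, Fin.val_rev, Finset.mem_insert, Finset.mem_singleton, Prod.ext_iff,
      Prod.fst_sub, Prod.snd_sub, Prod.map_fst, Prod.map_snd, Equiv.refl_apply]
    omega

lemma exists_iso_apply_corner_eq_origin (v : Fin m × Fin n)
    (h₁ : (v.1 : ℕ) = 0 ∨ (v.1 : ℕ) = m - 1) (h₂ : (v.2 : ℕ) = 0 ∨ (v.2 : ℕ) = n - 1) :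
    ∃ e : gridGraph m n ≃g gridGraph m n, gridToLattice m n (e v) = (0, 0) := by
  have h₁' := v.1.isLt
  have h₂' := v.2.isLt
  rcases h₁ with h₁ | h₁ <;> rcases h₂ with h₂ | h₂
  · exact ⟨.refl, by simp [gridToLattice, h₁, h₂]⟩
  · exact ⟨gridGraph.reflectSnd, by simp [gridGraph.reflectSnd, gridToLattice, h₁, h₂]; omega⟩
  · exact ⟨gridGraph.reflectFst, by simp [gridGraph.reflectFst, gridToLattice, h₁, h₂]; omega⟩
  · exact ⟨gridGraph.reflectFst.trans gridGraph.reflectSnd,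
      by simp [gridGraph.reflectFst, gridGraph.reflectSnd, gridToLattice, h₁, h₂]; omega⟩

end Grid

/-- If a BDF on Grid_{m×n} (3 ≤ m ≤ n) vanishes on the closed neighborhood of some
corner vertex, then it is identically zero. -/
theorem grid_bdf_corner_zero (m n : ℕ) (hm : 3 ≤ m) (hmn : m ≤ n)
    (f : Fin m × Fin n → ℤ) (hf : IsBDF (gridGraph m n) f)
    (hcorner : ∃ v : Fin m × Fin n,
      (v = (⟨0, by omega⟩, ⟨0, by omega⟩) ∨ v = (⟨0, by omega⟩, ⟨n - 1, by omega⟩) ∨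
       v = (⟨m - 1, by omega⟩, ⟨0, by omega⟩) ∨ v = (⟨m - 1, by omega⟩, ⟨n - 1, by omega⟩)) ∧
      f v = 0 ∧ ∀ u, (gridGraph m n).Adj v u → f u = 0) :
    ∀ v, f v = 0 := by
  obtain ⟨v, hv, h₀, hadj⟩ := hcorner
  obtain ⟨e, he⟩ := exists_iso_apply_corner_eq_origin v
    (by rcases hv with rfl | rfl | rfl | rfl <;> simp)
    (by rcases hv with rfl | rfl | rfl | rfl <;> simp)
  have hfe : IsBDF (gridGraph m n) (f ∘ e.symm) := hf.comp_iso e.symm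
  intro u
  simpa using hfe.eq_zero_of_closedNbhd_origin hm (e v) he (by simpa using h₀)
    (fun w hw => hadj _ (by simpa using e.symm.map_adj_iff.2 hw)) (e u)
end

section
/- The labeling of the path graph P_n given by repeating the pattern 1, −1, 0 (i.e., x_j = 1 if j ≡ 1 mod 3, x_j = −1 if j ≡ 2 mod 3, x_j = 0 if j ≡ 0 mod 3) is a non-zero balanced dominating function on P_n if and only if n ≡ 2 (mod 3), and its weight is 0. -/
open Finset

/-- The path graph P_n on vertices v_1, ..., v_n. -/
def pathGraph' (n : ℕ) : SimpleGraph (Fin n) :=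
  SimpleGraph.fromRel (fun p q => (q : ℕ) = (p : ℕ) + 1)

/-- The periodic labeling 1, -1, 0, 1, -1, 0, ... of the path P_n (so the j-th
vertex, 1-indexed, gets 1 if j ≡ 1 (mod 3), -1 if j ≡ 2 (mod 3), 0 if j ≡ 0 (mod 3)). -/
def pathPattern (n : ℕ) : Fin n → ℤ :=
  fun j => if (j : ℕ) % 3 = 0 then 1 else if (j : ℕ) % 3 = 1 then -1 else 0

/-!
The pattern is the restriction to `Fin n` of a 3-periodic sequence `p` on `ℕ` whose prefix sums
are `∑_{j<m} p j = [m ≡ 1 (mod 3)]`. The closed neighbourhood of `v` in the path is the window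
`[v - 1, min (v + 2) n)`, so its sum is a difference of two prefix sums. Away from the last
vertex the window ends are `v - 1 ≡ v + 2` (or `0` and `2` when `v = 0`), so the
difference vanishes; at the last vertex it is `[n ≡ 1] - [n - 2 ≡ 1]`, which vanishes iff
`n ≡ 2 (mod 3)`. The weight is the prefix sum `[n ≡ 1]`.
-/

lemma pathGraph'_adj {n : ℕ} {p q : Fin n} :
    (pathGraph' n).Adj p q ↔ (q : ℕ) = p + 1 ∨ (p : ℕ) = q + 1 := by
  simp only [pathGraph', SimpleGraph.fromRel_adj, ne_eq, Fin.ext_iff]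
  omega

-- `v - 1` is truncated, so at `v = 0` the window starts at `0`.
lemma closedSum_pathGraph'_eq_sum_Ico {n : ℕ} (g : ℕ → ℤ) (v : Fin n) :
    closedSum (pathGraph' n) (fun j => g j) v =
      ∑ j ∈ Ico ((v : ℕ) - 1) (min ((v : ℕ) + 2) n), g j := by
  classical
  have hwindow : univ.filter (fun u : Fin n => (v : ℕ) - 1 ≤ u ∧ (u : ℕ) < (v : ℕ) + 2) =
      insert v (univ.filter fun u => (pathGraph' n).Adj v u) := by
    ext u
    simp only [mem_filter, mem_univ, true_and, mem_insert, pathGraph'_adj, Fin.ext_iff]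
    omega
  have hIco : (range n).filter (fun j => (v : ℕ) - 1 ≤ j ∧ j < (v : ℕ) + 2) =
      Ico ((v : ℕ) - 1) (min ((v : ℕ) + 2) n) := by
    ext j
    simp only [mem_filter, mem_range, mem_Ico]
    omega
  calc closedSum (pathGraph' n) (fun j => g j) v
    _ = ∑ u ∈ univ.filter (fun u : Fin n => (v : ℕ) - 1 ≤ u ∧ (u : ℕ) < (v : ℕ) + 2),
          g u := by
          rw [hwindow, sum_insert (by simp), closedSum]
    _ = ∑ j ∈ range n, if (v : ℕ) - 1 ≤ j ∧ j < (v : ℕ) + 2 then g j else 0 := by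
          rw [sum_filter, ← Fin.sum_univ_eq_sum_range]
    _ = ∑ j ∈ Ico ((v : ℕ) - 1) (min ((v : ℕ) + 2) n), g j := by
          rw [← sum_filter, hIco]

def periodicPattern (j : ℕ) : ℤ :=
  if j % 3 = 0 then 1 else if j % 3 = 1 then -1 else 0

lemma pathPattern_eq (n : ℕ) : pathPattern n = fun j : Fin n => periodicPattern j := rfl

lemma sum_range_periodicPattern (m : ℕ) :
    ∑ j ∈ range m, periodicPattern j = if m % 3 = 1 then 1 else 0 := by
  induction m with
  | zero => simp
  | succ m ih =>
    rw [sum_range_succ, ih, periodicPattern]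
    split_ifs <;> omega

lemma closedSum_pathPattern {n : ℕ} (v : Fin n) :
    closedSum (pathGraph' n) (pathPattern n) v =
      (if min ((v : ℕ) + 2) n % 3 = 1 then 1 else 0) -
        (if ((v : ℕ) - 1) % 3 = 1 then 1 else 0) := by
  rw [pathPattern_eq, closedSum_pathGraph'_eq_sum_Ico,
    sum_Ico_eq_sub _ (by omega), sum_range_periodicPattern, sum_range_periodicPattern]

lemma closedSum_pathPattern_eq_zero_iff (n : ℕ) :
    (∀ v : Fin n, closedSum (pathGraph' n) (pathPattern n) v = 0) ↔ n = 0 ∨ n % 3 = 2 := by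
  refine ⟨fun hbal => ?_, fun hn v => ?_⟩
  · rcases Nat.eq_zero_or_pos n with hn | hn
    · exact .inl hn
    · have hlast := hbal ⟨n - 1, by omega⟩
      rw [closedSum_pathPattern, Fin.val_mk] at hlast
      split_ifs at hlast <;> omega
  · have hv := v.isLt
    rw [closedSum_pathPattern]
    split_ifs <;> omega

lemma pathPattern_mem (n : ℕ) (v : Fin n) :
    pathPattern n v = -1 ∨ pathPattern n v = 0 ∨ pathPattern n v = 1 := by
  unfold pathPattern
  split_ifs <;> simp

lemma pathPattern_ne_zero_iff (n : ℕ) : (pathPattern n ≠ fun _ => 0) ↔ 0 < n := by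
  refine ⟨fun hne => Nat.pos_of_ne_zero fun hn => hne (funext fun v => (hn ▸ v).elim0),
    fun hn h => ?_⟩
  simpa [pathPattern] using congrFun h ⟨0, hn⟩

lemma sum_pathPattern (n : ℕ) : ∑ j, pathPattern n j = if n % 3 = 1 then 1 else 0 := by
  rw [pathPattern_eq, Fin.sum_univ_eq_sum_range, sum_range_periodicPattern]

/-- The pattern 1, -1, 0 repeated is a non-zero balanced dominating function on P_n
iff n ≡ 2 (mod 3); in that case its weight is 0. -/
theorem pathPattern_bdf_iff (n : ℕ) :
    ((IsBDF (pathGraph' n) (pathPattern n) ∧ pathPattern n ≠ fun _ => 0) ↔ n % 3 = 2) ∧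
      (n % 3 = 2 → ∑ j, pathPattern n j = 0) := by
  refine ⟨?_, fun hn => by rw [sum_pathPattern, if_neg (by omega)]⟩
  rw [IsBDF, closedSum_pathPattern_eq_zero_iff, pathPattern_ne_zero_iff]
  constructor
  · rintro ⟨⟨-, hn | hn⟩, hpos⟩ <;> omega
  · intro hn
    exact ⟨⟨pathPattern_mem n, .inr hn⟩, by omega⟩
end

section
/- Every balanced dominating function on a grid graph Grid_{m×n} with 3 ≤ m ≤ n has weight 0; hence every such grid graph is d-balanced (γ_bd(Grid_{m×n}) = 0). -/
/-!
A balanced dominating function `f` of `gridGraph m n = P_m □ P_n` lies in the kernel of `1 + A`,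
where `A` is the adjacency matrix. The products of discrete sines
`sin (aπi/(m+1)) sin (bπj/(n+1))` are eigenvectors of `1 + A` with eigenvalue
`1 + 2 cos (aπ/(m+1)) + 2 cos (bπ/(n+1))`, and by the orthogonality of the discrete sine transform
the all-ones vector is a combination of them. Its coefficient
`(∑ᵢ sin (aπi/(m+1))) (∑ⱼ sin (bπj/(n+1)))` vanishes unless `η₁ = exp (iπa/(m+1))` and
`η₂ = exp (iπb/(n+1))` have even orders `r₁, r₂ > 2`, and then the eigenvalue
`1 + η₁ + η₁⁻¹ + η₂ + η₂⁻¹` is nonzero: summing the relation over its Galois conjugates would give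
`φ r₁ φ r₂ + 2 φ r₂ μ r₁ + 2 φ r₁ μ r₂ = 0`, whereas `φ r > 4` for every even `r > 2` with
`μ r = -1`. Since `1 + A` is symmetric, eigenvectors of nonzero eigenvalue are orthogonal to its
kernel; hence so is the all-ones vector, that is, `∑ f = 0`.
-/

open Finset

open Polynomial Matrix SimpleGraph ArithmeticFunction

section
open scoped ArithmeticFunction.Moebius ArithmeticFunction.omega Nat

theorem sum_nthRootsFinset_one {n : ℕ} (hn : 0 < n) :
    ∑ ξ ∈ nthRootsFinset n (1 : ℂ), ξ = if n = 1 then 1 else 0 := by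
  obtain ⟨ζ, hζ⟩ : ∃ ζ : ℂ, IsPrimitiveRoot ζ n :=
    ⟨_, Complex.isPrimitiveRoot_exp n hn.ne'⟩
  have himage : nthRootsFinset n (1 : ℂ) = (range n).image (ζ ^ ·) := by
    classical
    rw [nthRootsFinset_def, hζ.nthRoots_eq (one_pow n), ← range_val]
    simp [image]
  rw [himage, sum_image fun i hi j hj => hζ.pow_inj (mem_range.1 hi) (mem_range.1 hj)]
  split_ifs with h1
  · simp [h1]
  · exact hζ.geom_sum_eq_zero (by omega)

theorem sum_primitiveRoots_eq_moebius {n : ℕ} (hn : 0 < n) :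
    ∑ ξ ∈ primitiveRoots n ℂ, ξ = μ n := by
  classical
  have hdivisors : ∀ n > 0, ∑ d ∈ n.divisors, ∑ ξ ∈ primitiveRoots d ℂ, ξ =
      if n = 1 then 1 else 0 := fun n hn => by
    rw [← sum_nthRootsFinset_one hn, IsPrimitiveRoot.nthRoots_one_eq_biUnion_primitiveRoots,
      sum_biUnion fun _ _ _ _ h => IsPrimitiveRoot.disjoint h]
  rw [← sum_eq_iff_sum_mul_moebius_eq.1 hdivisors n hn, Nat.sum_divisorsAntidiagonal
    (fun a b => (μ a : ℂ) * if b = 1 then 1 else 0), sum_eq_single n]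
  · simp [Nat.div_self hn]
  · intro d hd hdn
    simp only [mul_ite, mul_one, mul_zero, ite_eq_right_iff]
    intro h
    exact absurd (Nat.eq_of_dvd_of_div_eq_one (Nat.dvd_of_mem_divisors hd) h) hdn
  · simp [hn.ne']

theorem four_lt_totient_of_moebius_eq_neg_one {r : ℕ} (he : Even r) (h2 : 2 < r)
    (hμ : μ r = -1) : 4 < φ r := by
  have hsq : Squarefree r := moebius_ne_zero_iff_squarefree.1 (by simp [hμ])
  have hω : ω r = #r.primeFactors := (List.card_toFinset _).symm
  have hodd : Odd #r.primeFactors := by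
    rw [← hω, cardDistinctFactors_eq_cardFactors_iff_squarefree (by omega) |>.2 hsq]
    rw [moebius_apply_of_squarefree hsq] at hμ
    exact (neg_one_pow_eq_neg_one_iff_odd (by norm_num)).1 hμ
  have hne_one : #r.primeFactors ≠ 1 := fun h => by
    have hp := Nat.squarefree_and_prime_pow_iff_prime.1
      ⟨hsq, isPrimePow_iff_card_primeFactors_eq_one.2 h⟩
    have := (hp.even_iff).1 he
    omega
  have h2mem : 2 ∈ r.primeFactors :=
    Nat.mem_primeFactors.2 ⟨Nat.prime_two, he.two_dvd, by omega⟩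
  have hcard : 1 < #(r.primeFactors.erase 2) := by
    rw [card_erase_of_mem h2mem]
    obtain ⟨k, hk⟩ := hodd
    omega
  obtain ⟨p, hp, q, hq, hpq⟩ := one_lt_card.1 hcard
  obtain ⟨hp2, hp⟩ := mem_erase.1 hp
  obtain ⟨hq2, hq⟩ := mem_erase.1 hq
  have hpq_coprime : p.Coprime q := (Nat.coprime_primes (Nat.prime_of_mem_primeFactors hp)
    (Nat.prime_of_mem_primeFactors hq)).2 hpq
  have hdvd : φ p * φ q ∣ φ r := by
    rw [← Nat.totient_mul hpq_coprime]
    exact Nat.totient_dvd_of_dvd (hpq_coprime.mul_dvd_of_dvd_of_dvd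
      (Nat.dvd_of_mem_primeFactors hp) (Nat.dvd_of_mem_primeFactors hq))
  have hle := Nat.le_of_dvd (Nat.totient_pos.2 (by omega)) hdvd
  rw [Nat.totient_prime (Nat.prime_of_mem_primeFactors hp),
    Nat.totient_prime (Nat.prime_of_mem_primeFactors hq)] at hle
  have hp3 := (Nat.prime_of_mem_primeFactors hp).two_le
  have hq3 := (Nat.prime_of_mem_primeFactors hq).two_le
  rcases lt_or_gt_of_ne hpq with h | h
  · nlinarith [Nat.mul_le_mul (show 2 ≤ p - 1 by omega) (show 3 ≤ q - 1 by omega)]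
  · nlinarith [Nat.mul_le_mul (show 3 ≤ p - 1 by omega) (show 2 ≤ q - 1 by omega)]

theorem neg_totient_lt_four_mul_moebius {r : ℕ} (he : Even r) (h2 : 2 < r) :
    -(φ r : ℤ) < 4 * μ r := by
  have hφ : 0 < φ r := Nat.totient_pos.2 (by omega)
  rcases moebius_eq_or r with h | h | h
  · rw [h]; omega
  · rw [h]; omega
  · have := four_lt_totient_of_moebius_eq_neg_one he h2 h
    rw [h]; omega

theorem MonoidHom.card_smul_sum_comp_of_surjective {G H M : Type*} [Group G] [Group H]
    [Fintype G] [Fintype H] [DecidableEq H] [AddCommMonoid M] (π : G →* H)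
    (hπ : Function.Surjective π) (F : H → M) :
    Fintype.card H • ∑ g, F (π g) = Fintype.card G • ∑ h, F h := by
  set c := #{g | π g = 1}
  have hfiber (h : H) : #{g | π g = h} = c := card_fiber_eq_of_mem_range π (hπ h) (hπ 1)
  have hsum : ∑ g, F (π g) = c • ∑ h, F h := by
    rw [← sum_fiberwise univ π, smul_sum]
    refine sum_congr rfl fun h _ => ?_
    rw [sum_congr rfl fun g hg => congrArg F (mem_filter.1 hg).2, sum_const, hfiber]
  have hcard : Fintype.card G = c * Fintype.card H := by
    rw [← card_univ, card_eq_sum_card_fiberwise (fun g _ => mem_univ (π g))]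
    simp [hfiber, mul_comm]
  rw [hsum, hcard, smul_smul, mul_comm]

theorem IsPrimitiveRoot.sum_units_pow_val_eq_sum_primitiveRoots {r : ℕ} [NeZero r] {η : ℂ}
    (hη : IsPrimitiveRoot η r) :
    ∑ s : (ZMod r)ˣ, η ^ (s : ZMod r).val = ∑ ξ ∈ primitiveRoots r ℂ, ξ := by
  refine sum_bij (fun s _ => η ^ (s : ZMod r).val) (fun s _ => ?_) (fun s _ t _ hst => ?_)
    (fun ξ hξ => ?_) fun _ _ => rfl
  · exact (mem_primitiveRoots (NeZero.pos r)).2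
      (hη.pow_of_coprime _ (ZMod.val_coe_unit_coprime s))
  · exact Units.ext (ZMod.val_injective r (hη.pow_inj (ZMod.val_lt _) (ZMod.val_lt _) hst))
  · obtain ⟨i, hir, hcop, rfl⟩ :=
      (hη.isPrimitiveRoot_iff).1 (isPrimitiveRoot_of_mem_primitiveRoots hξ)
    exact ⟨ZMod.unitOfCoprime i hcop, mem_univ _, by
      rw [ZMod.coe_unitOfCoprime, ZMod.val_natCast, Nat.mod_eq_of_lt hir]⟩

theorem IsPrimitiveRoot.totient_mul_sum_units_pow_val {K r : ℕ} [NeZero K] {η : ℂ}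
    (hη : IsPrimitiveRoot η r) (hrK : r ∣ K) :
    (φ r : ℂ) * ∑ t : (ZMod K)ˣ, η ^ (t : ZMod K).val = φ K * μ r := by
  have : NeZero r := ⟨fun h => NeZero.ne K (Nat.eq_zero_of_zero_dvd (h ▸ hrK))⟩
  have hval (t : (ZMod K)ˣ) :
      η ^ (t : ZMod K).val = η ^ (ZMod.unitsMap hrK t : ZMod r).val := by
    rw [ZMod.unitsMap_val, ZMod.cast_eq_val, ZMod.val_natCast, hη.eq_orderOf, pow_mod_orderOf]
  have h := (ZMod.unitsMap hrK).card_smul_sum_comp_of_surjective (ZMod.unitsMap_surjective hrK)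
    fun s => η ^ (s : ZMod r).val
  simp only [ZMod.card_units_eq_totient, nsmul_eq_mul] at h
  rw [sum_congr rfl fun t _ => hval t, h, hη.sum_units_pow_val_eq_sum_primitiveRoots]
  exact congrArg _ (sum_primitiveRoots_eq_moebius (NeZero.pos r))

theorem IsPrimitiveRoot.aeval_pow_eq_zero_of_coprime {K : ℕ} {ζ : ℂ}
    (hζ : IsPrimitiveRoot ζ K) (hK : 0 < K) {P : ℚ[X]} (hP : aeval ζ P = 0) {t : ℕ}
    (ht : t.Coprime K) :
    aeval (ζ ^ t) P = 0 := by
  obtain ⟨Q, rfl⟩ := minpoly.dvd ℚ ζ hP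
  rw [map_mul, ← cyclotomic_eq_minpoly_rat hζ hK,
    cyclotomic_eq_minpoly_rat (hζ.pow_of_coprime t ht) hK, minpoly.aeval, zero_mul]

theorem IsPrimitiveRoot.totient_mul_totient_add_eq_zero {η₁ η₂ : ℂ} {r₁ r₂ : ℕ}
    (h₁ : IsPrimitiveRoot η₁ r₁) (h₂ : IsPrimitiveRoot η₂ r₂) (hr₁ : 0 < r₁)
    (hr₂ : 0 < r₂) (h : 1 + (η₁ + η₁⁻¹) + (η₂ + η₂⁻¹) = 0) :
    (φ r₁ * φ r₂ + 2 * φ r₂ * μ r₁ + 2 * φ r₁ * μ r₂ : ℤ) = 0 := by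
  set K := r₁.lcm r₂
  have hK : 0 < K := Nat.lcm_pos hr₁ hr₂
  have : NeZero K := ⟨hK.ne'⟩
  obtain ⟨ζ, hζ⟩ : ∃ ζ : ℂ, IsPrimitiveRoot ζ K :=
    ⟨_, Complex.isPrimitiveRoot_exp K hK.ne'⟩
  have hpow₁ : η₁ ^ K = 1 := (h₁.pow_eq_one_iff_dvd K).2 (Nat.dvd_lcm_left r₁ r₂)
  have hpow₂ : η₂ ^ K = 1 := (h₂.pow_eq_one_iff_dvd K).2 (Nat.dvd_lcm_right r₁ r₂)
  obtain ⟨x₁, -, hx₁⟩ := hζ.eq_pow_of_pow_eq_one hpow₁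
  obtain ⟨y₁, -, hy₁⟩ := hζ.eq_pow_of_pow_eq_one (by rw [inv_pow, hpow₁, inv_one])
  obtain ⟨x₂, -, hx₂⟩ := hζ.eq_pow_of_pow_eq_one hpow₂
  obtain ⟨y₂, -, hy₂⟩ := hζ.eq_pow_of_pow_eq_one (by rw [inv_pow, hpow₂, inv_one])
  set P : ℚ[X] := 1 + X ^ x₁ + X ^ y₁ + X ^ x₂ + X ^ y₂
  have hP : aeval ζ P = 0 := by
    simp only [P, map_add, map_one, map_pow, aeval_X, hx₁, hy₁, hx₂, hy₂]
    linear_combination h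
  have hconj (t : (ZMod K)ˣ) : 1 + η₁ ^ (t : ZMod K).val + η₁⁻¹ ^ (t : ZMod K).val
      + η₂ ^ (t : ZMod K).val + η₂⁻¹ ^ (t : ZMod K).val = 0 := by
    have := hζ.aeval_pow_eq_zero_of_coprime hK hP (ZMod.val_coe_unit_coprime t)
    rw [← hy₁, ← hy₂, ← hx₁, ← hx₂]
    simpa only [P, map_add, map_one, map_pow, aeval_X, pow_right_comm ζ] using this
  have htrace := sum_congr rfl fun t (_ : t ∈ univ) => hconj t
  simp only [sum_add_distrib, sum_const, card_univ, ZMod.card_units_eq_totient, nsmul_eq_mul,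
    mul_one] at htrace
  have e₁ := h₁.totient_mul_sum_units_pow_val (K := K) (Nat.dvd_lcm_left r₁ r₂)
  have e₁' := h₁.inv.totient_mul_sum_units_pow_val (K := K) (Nat.dvd_lcm_left r₁ r₂)
  have e₂ := h₂.totient_mul_sum_units_pow_val (K := K) (Nat.dvd_lcm_right r₁ r₂)
  have e₂' := h₂.inv.totient_mul_sum_units_pow_val (K := K) (Nat.dvd_lcm_right r₁ r₂)
  have hK' :
      ((φ K * (φ r₁ * φ r₂ + 2 * φ r₂ * μ r₁ + 2 * φ r₁ * μ r₂) : ℤ) : ℂ) = 0 := by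
    push_cast
    linear_combination (φ r₁ * φ r₂ : ℂ) * htrace - (φ r₂ : ℂ) * (e₁ + e₁')
      - (φ r₁ : ℂ) * (e₂ + e₂')
  exact (mul_eq_zero.1 (Int.cast_eq_zero.1 hK')).resolve_left
    (by exact_mod_cast (Nat.totient_pos.2 hK).ne')

theorem one_add_add_inv_add_add_inv_ne_zero {η₁ η₂ : ℂ} {r₁ r₂ : ℕ}
    (h₁ : IsPrimitiveRoot η₁ r₁) (h₂ : IsPrimitiveRoot η₂ r₂) (he₁ : Even r₁)
    (he₂ : Even r₂) (hr₁ : 2 < r₁) (hr₂ : 2 < r₂) :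
    1 + (η₁ + η₁⁻¹) + (η₂ + η₂⁻¹) ≠ 0 := fun h => by
  have hzero := h₁.totient_mul_totient_add_eq_zero h₂ (by omega) (by omega) h
  have hb₁ := neg_totient_lt_four_mul_moebius he₁ hr₁
  have hb₂ := neg_totient_lt_four_mul_moebius he₂ hr₂
  have hφ₁ : (0 : ℤ) < φ r₁ := by exact_mod_cast Nat.totient_pos.2 (by omega)
  have hφ₂ : (0 : ℤ) < φ r₂ := by exact_mod_cast Nat.totient_pos.2 (by omega)
  -- twice the left side of `hzero` is `φ r₂ (φ r₁ + 4 μ r₁) + φ r₁ (φ r₂ + 4 μ r₂) > 0`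
  nlinarith [mul_pos hφ₂ (show (0 : ℤ) < φ r₁ + 4 * μ r₁ by omega),
    mul_pos hφ₁ (show (0 : ℤ) < φ r₂ + 4 * μ r₂ by omega)]

end

theorem even_and_two_lt_orderOf {G : Type*} [Monoid G] {x : G} {M : ℕ}
    (h : x ^ (2 * M) = 1) (hM : x ^ M ≠ 1) (h2 : x ^ 2 ≠ 1) : Even (orderOf x) ∧ 2 < orderOf x := by
  have hM0 : 0 < M := Nat.pos_of_ne_zero fun h0 => hM (by rw [h0, pow_zero])
  have hpos : 0 < orderOf x :=
    orderOf_pos_iff.2 (isOfFinOrder_iff_pow_eq_one.2 ⟨_, by omega, h⟩)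
  have heven : Even (orderOf x) := by
    by_contra hodd
    exact hM (orderOf_dvd_iff_pow_eq_one.1 ((Nat.coprime_two_right.2
      (Nat.not_even_iff_odd.1 hodd)).dvd_of_dvd_mul_left (orderOf_dvd_of_pow_eq_one h)))
  refine ⟨heven, ?_⟩
  have h1 : orderOf x ≠ 1 := fun h1 => hM (by rw [orderOf_eq_one_iff.1 h1, one_pow])
  have h2' : orderOf x ≠ 2 := fun h2' => h2 (h2' ▸ pow_orderOf_eq_one x)
  obtain ⟨k, hk⟩ := heven
  omega

section Sine

variable {K : Type*} [Field K]

/-- For `z = exp (iθ)` this is `2i sin pθ`. -/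
noncomputable def sineSeq (z : K) (p : ℕ) : K := z ^ p - z⁻¹ ^ p

theorem sineSeq_zero (z : K) : sineSeq z 0 = 0 := by simp [sineSeq]

theorem sineSeq_add_sineSeq {z : K} (hz : z ≠ 0) (p : ℕ) :
    sineSeq z p + sineSeq z (p + 2) = (z + z⁻¹) * sineSeq z (p + 1) := by
  simp only [sineSeq, pow_succ]
  field_simp
  ring

theorem sineSeq_eq_zero_of_pow_eq_one {z : K} {M : ℕ} (h : z ^ (2 * M) = 1) :
    sineSeq z M = 0 := by
  rw [sineSeq, inv_pow, sub_eq_zero]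
  exact eq_inv_of_mul_eq_one_left (by rw [← pow_add, ← two_mul, h])

theorem sineSeq_eq_zero_of_sq_eq_one {z : K} (h : z ^ 2 = 1) (p : ℕ) : sineSeq z p = 0 := by
  rw [sineSeq, inv_eq_of_mul_eq_one_right (by rwa [← sq]), sub_self]

theorem sum_sineSeq_eq_zero_of_pow_eq_one [CharZero K] {z : K} {m : ℕ} (h : z ^ (m + 1) = 1) :
    ∑ p ∈ range m, sineSeq z (p + 1) = 0 := by
  have hreflect (p : ℕ) (hp : p ∈ range m) :
      sineSeq z (m - 1 - p + 1) = -sineSeq z (p + 1) := by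
    have hsplit : m + 1 = (m - 1 - p + 1) + (p + 1) := by have := mem_range.1 hp; omega
    have hinv : z ^ (m - 1 - p + 1) = z⁻¹ ^ (p + 1) := by
      rw [inv_pow]
      exact eq_inv_of_mul_eq_one_left (by rw [← pow_add, ← hsplit, h])
    rw [sineSeq, sineSeq, hinv, inv_pow z (m - 1 - p + 1), hinv, inv_pow, inv_inv, neg_sub]
  have := sum_range_reflect (fun p => sineSeq z (p + 1)) m
  rw [sum_congr rfl hreflect, sum_neg_distrib, neg_eq_iff_add_eq_zero, ← two_mul] at this
  simpa using this

theorem sum_range_pow_eq_ite [DecidableEq K] {x : K} {n : ℕ} (h : x ^ n = 1) :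
    ∑ a ∈ range n, x ^ a = if x = 1 then (n : K) else 0 := by
  split_ifs with hx
  · simp [hx]
  · rw [geom_sum_eq hx, h, sub_self, zero_div]

theorem IsPrimitiveRoot.sum_sineSeq_mul_sineSeq {ζ : K} {M : ℕ}
    (hζ : IsPrimitiveRoot ζ (2 * M)) {p q : ℕ} (hpM : p < M) (hq : 0 < q) (hqM : q < M) :
    ∑ a ∈ range (2 * M), sineSeq (ζ ^ a) p * sineSeq (ζ ^ a) q =
      if p = q then -(4 * M : K) else 0 := by
  classical
  have hζ0 : ζ ≠ 0 := hζ.ne_zero (by omega)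
  have hroot {x : K} (hx : x ^ (2 * M) = 1) : (x⁻¹) ^ (2 * M) = 1 := by rw [inv_pow, hx, inv_one]
  have hp' : (ζ ^ p) ^ (2 * M) = 1 := by rw [pow_right_comm, hζ.pow_eq_one, one_pow]
  have hq' : (ζ ^ q) ^ (2 * M) = 1 := by rw [pow_right_comm, hζ.pow_eq_one, one_pow]
  have hpq : ζ ^ p * ζ ^ q ≠ 1 := by
    rw [← pow_add]; exact hζ.pow_ne_one_of_pos_of_lt (by omega) (by omega)
  have hdiag : ζ ^ p * (ζ ^ q)⁻¹ = 1 ↔ p = q := by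
    rw [mul_inv_eq_one₀ (pow_ne_zero _ hζ0)]
    exact ⟨fun h => hζ.pow_inj (by omega) (by omega) h, fun h => h ▸ rfl⟩
  have hexpand (a : ℕ) : sineSeq (ζ ^ a) p * sineSeq (ζ ^ a) q =
      (ζ ^ p * ζ ^ q) ^ a + ((ζ ^ p * ζ ^ q)⁻¹) ^ a
        - (ζ ^ p * (ζ ^ q)⁻¹) ^ a - ((ζ ^ p * (ζ ^ q)⁻¹)⁻¹) ^ a := by
    simp only [sineSeq, mul_inv, inv_inv, mul_pow, inv_pow, ← pow_mul, mul_comm a]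
    ring
  simp only [hexpand, sum_sub_distrib, sum_add_distrib]
  rw [sum_range_pow_eq_ite (by rw [mul_pow, hp', hq', one_mul]),
    sum_range_pow_eq_ite (hroot (by rw [mul_pow, hp', hq', one_mul])),
    sum_range_pow_eq_ite (by rw [mul_pow, hp', hroot hq', one_mul]),
    sum_range_pow_eq_ite (hroot (by rw [mul_pow, hp', hroot hq', one_mul])),
    if_neg hpq, if_neg (inv_ne_one.2 hpq), inv_eq_one]
  simp only [hdiag]
  split_ifs <;> push_cast <;> ring

theorem IsPrimitiveRoot.sum_sum_sineSeq_mul_sineSeq {ζ : K} {m : ℕ}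
    (hζ : IsPrimitiveRoot ζ (2 * (m + 1))) {j : ℕ} (hj : j < m) :
    ∑ a ∈ range (2 * (m + 1)),
        (∑ k ∈ range m, sineSeq (ζ ^ a) (k + 1)) * sineSeq (ζ ^ a) (j + 1) =
      -((4 * (m + 1) : ℕ) : K) := by
  simp only [sum_mul]
  rw [sum_comm, sum_congr rfl fun k hk => hζ.sum_sineSeq_mul_sineSeq (by simp at hk; omega)
    (by omega) (by omega)]
  simp [hj]

theorem even_and_two_lt_orderOf_of_sum_sineSeq_ne_zero [CharZero K] {z : K} {m : ℕ}
    (hz : z ^ (2 * (m + 1)) = 1) (hS : ∑ p ∈ range m, sineSeq z (p + 1) ≠ 0) :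
    Even (orderOf z) ∧ 2 < orderOf z :=
  even_and_two_lt_orderOf hz (fun h => hS (sum_sineSeq_eq_zero_of_pow_eq_one h))
    fun h => hS (by simp [sineSeq_eq_zero_of_sq_eq_one h])

end Sine

theorem SimpleGraph.pathGraph_adjMatrix_mulVec_eq_smul {R : Type*} [CommRing R] {m : ℕ}
    [DecidableRel (pathGraph m).Adj] {u : ℕ → R} {c : R} (h0 : u 0 = 0) (hm : u (m + 1) = 0)
    (hu : ∀ p, u p + u (p + 2) = c * u (p + 1)) :
    (pathGraph m).adjMatrix R *ᵥ (fun j : Fin m => u (j + 1)) =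
      c • fun j : Fin m => u (j + 1) := by
  ext j
  have hj := j.isLt
  have hsplit : ∀ k ∈ range m, (if (j : ℕ) + 1 = k ∨ k + 1 = j then u (k + 1) else 0) =
      (if j + 1 = k then u (k + 1) else 0) + (if k + 1 = (j : ℕ) then u (k + 1) else 0) :=
    fun k _ => by split_ifs <;> first | rfl | (exfalso; omega) | simp
  have hup : ∑ k ∈ range m, (if (j : ℕ) + 1 = k then u (k + 1) else 0) = u (j + 2) := by
    rw [sum_ite_eq]
    split_ifs with h
    · rfl
    · rw [show (j : ℕ) + 2 = m + 1 by simp at h; omega, hm]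
  have hdown : ∑ k ∈ range m, (if k + 1 = (j : ℕ) then u (k + 1) else 0) = u j := by
    have := sum_range_succ' (fun p => if p = (j : ℕ) then u p else 0) m
    rw [sum_ite_eq', if_pos (mem_range.2 (by omega))] at this
    rw [this]
    split_ifs with h
    · rw [← h, h0, add_zero]
    · rw [add_zero]
  simp only [mulVec, dotProduct, adjMatrix_apply, pathGraph_adj, ite_mul, one_mul, zero_mul,
    Pi.smul_apply, smul_eq_mul]
  rw [Fin.sum_univ_eq_sum_range (fun k => if (j : ℕ) + 1 = k ∨ k + 1 = j then u (k + 1) else 0),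
    sum_congr rfl hsplit, sum_add_distrib, hup, hdown, add_comm, hu]

theorem SimpleGraph.pathGraph_adjMatrix_mulVec_sineSeq {K : Type*} [Field K] {m : ℕ}
    [DecidableRel (pathGraph m).Adj] {z : K} (hz : z ^ (2 * (m + 1)) = 1) :
    (pathGraph m).adjMatrix K *ᵥ (fun j : Fin m => sineSeq z (j + 1)) =
      (z + z⁻¹) • fun j : Fin m => sineSeq z (j + 1) :=
  pathGraph_adjMatrix_mulVec_eq_smul (sineSeq_zero z) (sineSeq_eq_zero_of_pow_eq_one hz)
    (sineSeq_add_sineSeq (by rintro rfl; simp at hz))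

theorem Matrix.IsSymm.dotProduct_eq_zero_of_mulVec_eq_smul {V K : Type*} [Fintype V]
    [Field K] {B : Matrix V V K} (hB : B.IsSymm) {g φ : V → K} (hg : B *ᵥ g = 0) {c : K}
    (hc : c ≠ 0) (hφ : B *ᵥ φ = c • φ) : φ ⬝ᵥ g = 0 := by
  have : c * (φ ⬝ᵥ g) = 0 := by
    rw [← smul_eq_mul, ← smul_dotProduct, ← hφ, dotProduct_comm, dotProduct_mulVec,
      ← mulVec_transpose, hB.eq, hg, zero_dotProduct]
  exact (mul_eq_zero.1 this).resolve_left hc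

theorem Matrix.IsSymm.sum_eq_zero_of_mulVec_eq_zero {V ι K : Type*} [Fintype V] [Field K]
    {B : Matrix V V K} (hB : B.IsSymm) {g : V → K} (hg : B *ᵥ g = 0) (s : Finset ι)
    (φ : ι → V → K) (c e : ι → K) (hφ : ∀ i ∈ s, B *ᵥ φ i = e i • φ i)
    (hce : ∀ i ∈ s, c i ≠ 0 → e i ≠ 0) {d : K} (hd : d ≠ 0)
    (hconst : ∀ v, ∑ i ∈ s, c i * φ i v = d) :
    ∑ v, g v = 0 := by
  have horth (i : ι) (hi : i ∈ s) : c i * (φ i ⬝ᵥ g) = 0 := by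
    by_cases hci : c i = 0
    · rw [hci, zero_mul]
    · rw [hB.dotProduct_eq_zero_of_mulVec_eq_smul hg (hce i hi hci) (hφ i hi), mul_zero]
  have : d * ∑ v, g v = 0 := calc
    d * ∑ v, g v = ∑ v, (∑ i ∈ s, c i * φ i v) * g v := by simp only [hconst, mul_sum]
    _ = ∑ i ∈ s, c i * (φ i ⬝ᵥ g) := by
      simp only [dotProduct, sum_mul, mul_sum, mul_assoc]
      exact sum_comm
    _ = 0 := sum_eq_zero horth
  exact (mul_eq_zero.1 this).resolve_left hd

theorem SimpleGraph.adjMatrix_boxProd_mulVec_eq_smul {α β R : Type*} [Fintype α] [Fintype β]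
    [CommRing R] {G : SimpleGraph α} {H : SimpleGraph β} [DecidableRel G.Adj]
    [DecidableRel H.Adj] [DecidableRel (G □ H).Adj] {φ : α → R} {ψ : β → R} {a b : R}
    (hφ : G.adjMatrix R *ᵥ φ = a • φ) (hψ : H.adjMatrix R *ᵥ ψ = b • ψ) :
    (G □ H).adjMatrix R *ᵥ (fun x => φ x.1 * ψ x.2) =
      (a + b) • fun x => φ x.1 * ψ x.2 := by
  ext ⟨x, y⟩
  have hφx := congrFun hφ x
  have hψy := congrFun hψ y
  simp only [adjMatrix_mulVec_apply, Pi.smul_apply, smul_eq_mul] at hφx hψy ⊢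
  rw [neighborFinset_boxProd, sum_disjUnion, sum_product, sum_product]
  simp only [sum_singleton, ← sum_mul, ← mul_sum, hφx, hψy]
  ring

theorem gridGraph_eq_boxProd (m n : ℕ) : gridGraph m n = pathGraph m □ pathGraph n := by
  ext ⟨a, b⟩ ⟨c, d⟩
  simp only [gridGraph, fromRel_adj, boxProd_adj, pathGraph_adj,
    Fin.ext_iff, Prod.mk.injEq, ne_eq]
  omega

theorem IsBDF.one_add_adjMatrix_mulVec_eq_zero {V : Type*} [Fintype V] [DecidableEq V]
    {G : SimpleGraph V} [DecidableRel G.Adj] {f : V → ℤ} (hf : IsBDF G f) :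
    (1 + G.adjMatrix ℂ) *ᵥ (fun v => (f v : ℂ)) = 0 := by
  ext v
  have := hf.2 v
  simp only [closedSum, sum_filter] at this
  rw [add_mulVec, one_mulVec, Pi.add_apply, Pi.zero_apply]
  simp only [mulVec, dotProduct, adjMatrix_apply, ite_mul, one_mul, zero_mul]
  exact_mod_cast this

theorem sum_eq_zero_of_isBDF_gridGraph {m n : ℕ} {f : Fin m × Fin n → ℤ}
    (hf : IsBDF (gridGraph m n) f) : ∑ v, f v = 0 := by
  classical
  rw [gridGraph_eq_boxProd] at hf
  obtain ⟨ζ, hζ⟩ : ∃ ζ : ℂ, IsPrimitiveRoot ζ (2 * (m + 1)) :=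
    ⟨_, Complex.isPrimitiveRoot_exp _ (by omega)⟩
  obtain ⟨ξ, hξ⟩ : ∃ ξ : ℂ, IsPrimitiveRoot ξ (2 * (n + 1)) :=
    ⟨_, Complex.isPrimitiveRoot_exp _ (by omega)⟩
  have hζa (a : ℕ) : (ζ ^ a) ^ (2 * (m + 1)) = 1 := by
    rw [pow_right_comm, hζ.pow_eq_one, one_pow]
  have hξb (b : ℕ) : (ξ ^ b) ^ (2 * (n + 1)) = 1 := by
    rw [pow_right_comm, hξ.pow_eq_one, one_pow]
  let S (z : ℂ) (k : ℕ) : ℂ := ∑ p ∈ range k, sineSeq z (p + 1)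
  have key := (isSymm_one.add (isSymm_adjMatrix _)).sum_eq_zero_of_mulVec_eq_zero
    hf.one_add_adjMatrix_mulVec_eq_zero
    (range (2 * (m + 1)) ×ˢ range (2 * (n + 1)))
    (fun ab v => sineSeq (ζ ^ ab.1) (v.1 + 1) * sineSeq (ξ ^ ab.2) (v.2 + 1))
    (fun ab => S (ζ ^ ab.1) m * S (ξ ^ ab.2) n)
    (fun ab => 1 + (ζ ^ ab.1 + (ζ ^ ab.1)⁻¹ + (ξ ^ ab.2 + (ξ ^ ab.2)⁻¹)))
    (fun ab _ => by
      rw [add_mulVec, one_mulVec, adjMatrix_boxProd_mulVec_eq_smul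
        (pathGraph_adjMatrix_mulVec_sineSeq (hζa ab.1))
        (pathGraph_adjMatrix_mulVec_sineSeq (hξb ab.2)), add_smul 1, one_smul])
    (fun ab _ hc => by
      obtain ⟨hSa, hSb⟩ := mul_ne_zero_iff.1 hc
      obtain ⟨he₁, hr₁⟩ := even_and_two_lt_orderOf_of_sum_sineSeq_ne_zero (hζa ab.1) hSa
      obtain ⟨he₂, hr₂⟩ := even_and_two_lt_orderOf_of_sum_sineSeq_ne_zero (hξb ab.2) hSb
      rw [← add_assoc]
      exact one_add_add_inv_add_add_inv_ne_zero (.orderOf _) (.orderOf _) he₁ he₂ hr₁ hr₂)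
    (d := -((4 * (m + 1) : ℕ) : ℂ) * -((4 * (n + 1) : ℕ) : ℂ))
    (mul_ne_zero (neg_ne_zero.2 (Nat.cast_ne_zero.2 (by omega)))
      (neg_ne_zero.2 (Nat.cast_ne_zero.2 (by omega))))
    (fun v => by
      rw [sum_product, ← hζ.sum_sum_sineSeq_mul_sineSeq v.1.isLt,
        ← hξ.sum_sum_sineSeq_mul_sineSeq v.2.isLt, sum_mul_sum]
      exact sum_congr rfl fun a _ => sum_congr rfl fun b _ => by ring)
  exact_mod_cast key

theorem grid_d_balanced_general (m n : ℕ) :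
    (∀ f : Fin m × Fin n → ℤ, IsBDF (gridGraph m n) f → ∑ v, f v = 0) ∧
      IsGreatest {w : ℤ | ∃ f : Fin m × Fin n → ℤ,
        IsBDF (gridGraph m n) f ∧ w = ∑ v, f v} 0 := by
  refine ⟨fun f hf => sum_eq_zero_of_isBDF_gridGraph hf,
    ⟨0, ⟨by simp, fun v => by simp [closedSum]⟩, by simp⟩, ?_⟩
  rintro w ⟨f, hf, rfl⟩
  exact (sum_eq_zero_of_isBDF_gridGraph hf).le

/-- Every balanced dominating function on Grid_{m×n} with 3 ≤ m ≤ n has weight 0,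
hence every such grid graph is d-balanced. -/
theorem grid_d_balanced (m n : ℕ) (hm : 3 ≤ m) (hmn : m ≤ n) :
    (∀ f : Fin m × Fin n → ℤ, IsBDF (gridGraph m n) f → ∑ v, f v = 0) ∧
      IsGreatest {w : ℤ | ∃ f : Fin m × Fin n → ℤ,
        IsBDF (gridGraph m n) f ∧ w = ∑ v, f v} 0 :=
  grid_d_balanced_general m n
end
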